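/- Let n, m, k_f, k_b be integers with n, m ≥ 1 and k_f, k_b ≥ 0, and set k = 2·k_f + 2·k_b and v = (k_f² + k_b² + 1)·(2·k_f·k_b + 1). If k²·v·log₂(n+1) + k·v·log₂ m + v·(1 + log₂ v) ≤ n, then the set disjointness problem Disj_n cannot be solved by any mp2s-automaton with parameters (D_n, m, k_f, k_b), i.e., by any mp2s-automaton over the data set D_n with m states, k_f forward heads and k_b backward heads on each of the two input streams. -/
import Mathlib


/-- An mp2s-automaton with data set `D`, `m` states, `kf` forward heads and `kb` backward
heads on each of the two input streams.  The heads are indexed by `Fin (2*kf + 2*kb)`: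
indices `< kf` are the forward heads on the first stream, indices in `[kf, 2*kf)` are the
forward heads on the second stream, indices in `[2*kf, 2*kf + kb)` are the backward heads
on the first stream, and the remaining indices are the backward heads on the second stream.
In the transition function, `none` plays the role of the special symbol `end`, and
`true`/`false` mean `advance`/`stay`. -/
structure MP2S (D : Type) (m kf kb : ℕ) where
  /-- the state space -/
  Q : Type
  [fintypeQ : Fintype Q]
  cardQ : Fintype.card Q = m
  /-- the designated start state -/
  start : Q
  /-- the designated set of accepting states -/
  accept : Set Q
  /-- the deterministic transition function -/
  δ : Q → (Fin (2*kf + 2*kb) → Option D) → Q × (Fin (2*kf + 2*kb) → Bool)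

namespace MP2S

attribute [instance] fintypeQ

variable {D : Type} {m kf kb : ℕ}

/-- The input stream that head `i` moves over (`S` or `T`). -/
def streamOf (S T : List D) (i : Fin (2*kf + 2*kb)) : List D :=
  if i.val < kf ∨ (2*kf ≤ i.val ∧ i.val < 2*kf + kb) then S else T

/-- The symbol currently observed by head `i`, where `pos i` counts the number of
advances head `i` has made so far; forward heads read their stream from left to right,
backward heads from right to left, and `none` (the `end` symbol) is observed once the
head has been advanced beyond the last element it can access. -/
def obs (S T : List D) (pos : Fin (2*kf + 2*kb) → ℕ) (i : Fin (2*kf + 2*kb)) : Option D :=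
  let L := streamOf S T i
  if pos i < L.length then
    if i.val < 2*kf then L[pos i]? else L[L.length - 1 - pos i]?
  else none

/-- All heads have passed their entire stream. -/
def Done (S T : List D) (pos : Fin (2*kf + 2*kb) → ℕ) : Prop :=
  ∀ i, (streamOf S T i).length ≤ pos i

instance (S T : List D) (pos : Fin (2*kf + 2*kb) → ℕ) : Decidable (Done S T pos) :=
  inferInstanceAs (Decidable (∀ i, (streamOf S T i).length ≤ pos i))

/-- One computation step of the automaton on input `(S, T)`; a configuration consists of
the current state together with the number of advances each head has made so far.
Once every head has passed its entire stream the computation has ended and the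
configuration stays unchanged. -/
def step (A : MP2S D m kf kb) (S T : List D) (c : A.Q × (Fin (2*kf + 2*kb) → ℕ)) :
    A.Q × (Fin (2*kf + 2*kb) → ℕ) :=
  if Done S T c.2 then c
  else
    let r := A.δ c.1 (obs S T c.2)
    (r.1, fun i => if r.2 i then min (c.2 i + 1) (streamOf S T i).length else c.2 i)

/-- The configuration of the automaton on input `(S, T)` after `t` steps, starting from
the initial configuration. -/
def run (A : MP2S D m kf kb) (S T : List D) (t : ℕ) : A.Q × (Fin (2*kf + 2*kb) → ℕ) :=
  (A.step S T)^[t] (A.start, fun _ => 0)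

/-- The automaton accepts the input `(S, T)` if its computation ends (i.e., every head has
passed its entire stream) in an accepting state. -/
def Accepts (A : MP2S D m kf kb) (S T : List D) : Prop :=
  ∃ t, Done S T (A.run S T t).2 ∧ (A.run S T t).1 ∈ A.accept

/-- The fixed data set `D_n` of `2n` distinct items: `(i, false)` plays the role of `a_i`
and `(i, true)` plays the role of `b_i`. -/
abbrev Dn (n : ℕ) : Type := Fin n × Bool

/-- The automaton solves the set disjointness problem `Disj_n`: for all input streams
`S`, `T` over `D_n` of length `n`, it accepts iff the sets of elements occurring in `S`
and in `T` are disjoint. -/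
def SolvesDisj (n : ℕ) (A : MP2S (Dn n) m kf kb) : Prop :=
  ∀ S T : List (Dn n), S.length = n → T.length = n →
    (A.Accepts S T ↔ ∀ x ∈ S, x ∉ T)

end MP2S

namespace DisjAux

open MP2S

section RunLemmas

variable {D : Type} {m kf kb : ℕ} (A : MP2S D m kf kb) (S T : List D)

lemma run_zero : A.run S T 0 = (A.start, fun _ => 0) := rfl

lemma run_succ (t : ℕ) : A.run S T (t+1) = A.step S T (A.run S T t) := by
  unfold MP2S.run
  rw [Function.iterate_succ_apply']

lemma run_add (s t : ℕ) : A.run S T (s + t) = (A.step S T)^[t] (A.run S T s) := by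
  unfold MP2S.run
  rw [Nat.add_comm s t]
  exact Function.iterate_add_apply _ t s _

/-- single-step position facts, assuming the position is within bounds -/
lemma pos_step (x : A.Q × (Fin (2*kf+2*kb) → ℕ)) (i : Fin (2*kf+2*kb))
    (hx : x.2 i ≤ (streamOf S T i).length) :
    (A.step S T x).2 i = x.2 i ∨
      ((A.step S T x).2 i = x.2 i + 1 ∧ x.2 i + 1 ≤ (streamOf S T i).length) := by
  unfold MP2S.step
  split
  · left; rfl
  · simp only
    split
    · rcases le_or_gt (x.2 i + 1) ((streamOf S T i).length) with h | h
      · right; exact ⟨min_eq_left h, h⟩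
      · left
        have : min (x.2 i + 1) (streamOf S T i).length = (streamOf S T i).length := by omega
        omega
    · left; rfl

lemma pos_le (t : ℕ) (i : Fin (2*kf+2*kb)) :
    (A.run S T t).2 i ≤ (streamOf S T i).length := by
  induction t with
  | zero => exact Nat.zero_le _
  | succ t ih =>
    rw [run_succ]
    rcases pos_step A S T (A.run S T t) i ih with h | h <;> omega

lemma pos_succ_facts (t : ℕ) (i : Fin (2*kf+2*kb)) :
    (A.run S T t).2 i ≤ (A.run S T (t+1)).2 i ∧
      (A.run S T (t+1)).2 i ≤ (A.run S T t).2 i + 1 := by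
  rw [run_succ]
  rcases pos_step A S T (A.run S T t) i (pos_le A S T t i) with h | h <;> omega

lemma pos_mono (i : Fin (2*kf+2*kb)) : Monotone (fun t => (A.run S T t).2 i) := by
  apply monotone_nat_of_le_succ
  intro t
  exact (pos_succ_facts A S T t i).1

lemma done_stable {t : ℕ} (h : Done S T ((A.run S T t).2)) :
    ∀ t', t ≤ t' → A.run S T t' = A.run S T t := by
  intro t' ht'
  induction t' with
  | zero => cases (Nat.le_zero.mp ht'); rfl
  | succ u ih =>
    rcases Nat.lt_or_ge t (u+1) with hlt | hge
    · have hu : t ≤ u := by omega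
      rw [run_succ, ih hu]
      unfold MP2S.step
      rw [if_pos h]
    · have : t = u + 1 := by omega
      subst this; rfl

/-- Done holds iff every position equals the stream length -/
lemma done_iff (t : ℕ) :
    Done S T ((A.run S T t).2) ↔ ∀ i, (A.run S T t).2 i = (streamOf S T i).length := by
  constructor
  · intro h i
    exact le_antisymm (pos_le A S T t i) (h i)
  · intro h i
    exact (h i).ge

end RunLemmas

section StepCongr

variable {D : Type} {m kf kb : ℕ} (A : MP2S D m kf kb)

/-- if lengths match and the observations agree, steps agree -/
lemma step_congr {S T S' T' : List D}
    (hlen : ∀ i : Fin (2*kf+2*kb), (streamOf S T i).length = (streamOf S' T' i).length)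
    (x : A.Q × (Fin (2*kf+2*kb) → ℕ))
    (hobs : MP2S.obs S T x.2 = MP2S.obs S' T' x.2) :
    A.step S T x = A.step S' T' x := by
  have hdone : Done S T x.2 ↔ Done S' T' x.2 := by
    unfold MP2S.Done
    constructor <;> intro h i
    · rw [← hlen i]; exact h i
    · rw [hlen i]; exact h i
  unfold MP2S.step
  by_cases h : Done S T x.2
  · rw [if_pos h, if_pos (hdone.1 h)]
  · rw [if_neg h, if_neg (fun hh => h (hdone.2 hh)), hobs]
    simp only
    congr 1
    funext i
    rw [hlen i]

/-- pointwise condition implying equal observations -/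
lemma obs_congr {S T S' T' : List D}
    (pos : Fin (2*kf+2*kb) → ℕ)
    (h : ∀ i : Fin (2*kf+2*kb),
      (streamOf S T i).length = (streamOf S' T' i).length ∧
      (pos i < (streamOf S T i).length →
        (if i.val < 2*kf then (streamOf S T i)[pos i]?
          else (streamOf S T i)[(streamOf S T i).length - 1 - pos i]?) =
        (if i.val < 2*kf then (streamOf S' T' i)[pos i]?
          else (streamOf S' T' i)[(streamOf S' T' i).length - 1 - pos i]?))) :
    MP2S.obs S T pos = MP2S.obs S' T' pos := by
  funext i
  unfold MP2S.obs
  simp only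
  rw [← (h i).1]
  by_cases hp : pos i < (streamOf S T i).length
  · rw [if_pos hp, if_pos hp]
    have := (h i).2 hp
    rw [← (h i).1] at this
    exact this
  · rw [if_neg hp, if_neg hp]

end StepCongr

/-- two monotone/antitone trajectories share at most one value -/
lemma share_unique {F G : ℕ → ℕ} (hF : Monotone F) (hG : Antitone G)
    {t t' x y : ℕ} (h1 : F t = x) (h2 : G t = x) (h3 : F t' = y) (h4 : G t' = y) :
    x = y := by
  rcases le_total t t' with h | h
  · exact le_antisymm (h1 ▸ h3 ▸ hF h) (h4 ▸ h2 ▸ hG h)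
  · exact le_antisymm (h4 ▸ h2 ▸ hG h) (h1 ▸ h3 ▸ hF h)



/-! ### Geometry: blocks and the permutation tau -/

/-- subblock of an index -/
def sbl (v1 v2 b : ℕ) (i : ℕ) : ℕ := min (i / b) (v1 * v2 - 1)

/-- superblock of an index -/
def spb (v1 v2 b : ℕ) (i : ℕ) : ℕ := sbl v1 v2 b i / v2

def slo (v2 b : ℕ) (j : ℕ) : ℕ := j * (v2 * b)

def shi (v1 v2 b n : ℕ) (j : ℕ) : ℕ := if j + 1 = v1 then n else (j + 1) * (v2 * b)

def cLo (b : ℕ) (c : ℕ) : ℕ := c * b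

def cHi (v1 v2 b n : ℕ) (c : ℕ) : ℕ := if c + 1 = v1 * v2 then n else (c + 1) * b

/-- the permutation of positions used for the second stream -/
def tau (v1 v2 b n : ℕ) (q : ℕ) : ℕ :=
  q + (slo v2 b (spb v1 v2 b (n - 1 - q)) + shi v1 v2 b n (spb v1 v2 b (n - 1 - q))) - n

section Geometry

variable {v1 v2 b n : ℕ}

lemma sbl_lt (hv1 : 1 ≤ v1) (hv2 : 1 ≤ v2) (i : ℕ) : sbl v1 v2 b i < v1 * v2 := by
  have : 1 ≤ v1 * v2 := Nat.one_le_iff_ne_zero.2 (by positivity)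
  exact lt_of_le_of_lt (min_le_right _ _) (by omega)

lemma sbl_mono : Monotone (sbl v1 v2 b) := fun _ _ h =>
  min_le_min (Nat.div_le_div_right h) le_rfl

lemma spb_mono : Monotone (spb v1 v2 b) := fun _ _ h =>
  Nat.div_le_div_right (sbl_mono h)

lemma div_facts (hb : 1 ≤ b) (i c : ℕ) : (c ≤ i / b ↔ c * b ≤ i) ∧ (i / b < c ↔ i < c * b) := by
  constructor
  · exact Nat.le_div_iff_mul_le hb
  · rw [Nat.div_lt_iff_lt_mul hb]

lemma sbl_char (hb : 1 ≤ b) {i c : ℕ} (hi : i < n)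
    (hc : c < v1 * v2) : sbl v1 v2 b i = c ↔ cLo b c ≤ i ∧ i < cHi v1 v2 b n c := by
  have h1 := (div_facts hb i c).1
  have h2 := (div_facts hb i (c+1)).1
  unfold sbl cLo cHi
  rcases eq_or_lt_of_le (Nat.succ_le_of_lt hc) with hc1 | hc1
  · rw [if_pos hc1]
    omega
  · rw [if_neg (by omega : ¬ (c + 1 = v1 * v2))]
    omega

lemma cHi_le (hvb : v1 * v2 * b ≤ n) {c : ℕ} (hc : c < v1 * v2) :
    cHi v1 v2 b n c ≤ n := by
  unfold cHi
  split
  · exact le_rfl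
  · calc (c+1) * b ≤ (v1*v2) * b := Nat.mul_le_mul_right b (by omega)
    _ ≤ n := hvb

lemma cLo_add_b_le_cHi (hb : 1 ≤ b) (hvb : v1 * v2 * b ≤ n) {c : ℕ} (hc : c < v1 * v2) :
    cLo b c + b ≤ cHi v1 v2 b n c := by
  have hcb : (c+1) * b = c * b + b := by ring
  unfold cLo cHi
  split
  · have : (c+1) * b ≤ v1 * v2 * b := Nat.mul_le_mul_right b (by omega)
    omega
  · omega

/-- superblock equals the min-form -/
lemma spb_eq_min (hv2 : 1 ≤ v2) (i : ℕ) :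
    spb v1 v2 b i = min (i / (v2 * b)) (v1 - 1) := by
  unfold spb sbl
  rcases Nat.eq_zero_or_pos v1 with hv1 | hv1
  · subst hv1; simp
  have hdd : i / b / v2 = i / (v2 * b) := by
    rw [Nat.div_div_eq_div_mul, Nat.mul_comm]
  have hkey : (v1 * v2 - 1) / v2 = v1 - 1 := by
    have hsplit : v1 * v2 - 1 = v2 * (v1 - 1) + (v2 - 1) := by
      cases v1 with
      | zero => omega
      | succ w =>
        have e1 : (w+1) * v2 = v2 * w + v2 := by ring
        have e2 : v2 * (w + 1 - 1) = v2 * w := by norm_num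
        omega
    rw [hsplit, Nat.mul_add_div (by omega), Nat.div_eq_of_lt (by omega)]
    omega
  rcases le_or_gt (v1 * v2 - 1) (i / b) with hcase | hcase
  · rw [min_eq_right hcase, hkey]
    have : v1 - 1 ≤ i / b / v2 := by
      rw [← hkey]; exact Nat.div_le_div_right hcase
    rw [hdd] at this
    omega
  · rw [min_eq_left hcase.le, hdd.symm]
    have : i / b / v2 ≤ (v1*v2-1)/v2 := Nat.div_le_div_right hcase.le
    rw [hkey] at this
    omega

lemma spb_lt (hv1 : 1 ≤ v1) (hv2 : 1 ≤ v2) (i : ℕ) : spb v1 v2 b i < v1 := by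
  rw [spb_eq_min hv2]
  exact lt_of_le_of_lt (min_le_right _ _) (by omega)

lemma spb_char (hv2 : 1 ≤ v2) (hb : 1 ≤ b) (hvb : v1 * v2 * b ≤ n) {i j : ℕ} (hi : i < n)
    (hj : j < v1) : spb v1 v2 b i = j ↔ slo v2 b j ≤ i ∧ i < shi v1 v2 b n j := by
  have hB : 1 ≤ v2 * b := Nat.mul_pos hv2 hb
  have h1 := (div_facts hB i j).1
  have h2 := (div_facts hB i (j+1)).1
  rw [spb_eq_min hv2]
  unfold slo shi
  have hvbn : v1 * (v2 * b) ≤ n := by rw [← Nat.mul_assoc]; exact hvb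
  rcases eq_or_lt_of_le (Nat.succ_le_of_lt hj) with hj1 | hj1
  · rw [if_pos hj1]; omega
  · rw [if_neg (by omega : ¬ (j + 1 = v1))]
    have : (j+1) * (v2*b) ≤ v1 * (v2*b) := Nat.mul_le_mul_right _ (by omega)
    omega

lemma shi_le (hvb : v1 * v2 * b ≤ n) {j : ℕ} (hj : j < v1) : shi v1 v2 b n j ≤ n := by
  unfold shi
  split
  · exact le_rfl
  · calc (j+1) * (v2*b) ≤ v1 * (v2*b) := Nat.mul_le_mul_right _ (by omega)
    _ ≤ n := by rw [← Nat.mul_assoc]; exact hvb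

/-- Relation between subblock and superblock: `spb i = sbl i / v2` by definition. -/
lemma spb_def (i : ℕ) : spb v1 v2 b i = sbl v1 v2 b i / v2 := rfl

section Tau

variable (hv1 : 1 ≤ v1) (hv2 : 1 ≤ v2) (hb : 1 ≤ b) (hvb : v1 * v2 * b ≤ n)
include hv1 hv2 hb hvb

lemma tau_spec {q : ℕ} (hq : q < n) :
    slo v2 b (spb v1 v2 b (n-1-q)) ≤ tau v1 v2 b n q ∧
    tau v1 v2 b n q < shi v1 v2 b n (spb v1 v2 b (n-1-q)) ∧
    n ≤ q + (slo v2 b (spb v1 v2 b (n-1-q)) + shi v1 v2 b n (spb v1 v2 b (n-1-q))) := by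
  set j := spb v1 v2 b (n-1-q) with hjdef
  have hj : j < v1 := spb_lt hv1 hv2 _
  have hmem : slo v2 b j ≤ n-1-q ∧ n-1-q < shi v1 v2 b n j :=
    (spb_char hv2 hb hvb (by omega) hj).1 rfl
  unfold tau
  rw [← hjdef]
  omega

lemma tau_lt {q : ℕ} (hq : q < n) : tau v1 v2 b n q < n := by
  have h := tau_spec hv1 hv2 hb hvb hq
  have := shi_le hvb (spb_lt hv1 hv2 (n-1-q) : spb v1 v2 b (n-1-q) < v1)
  omega

lemma spb_tau {q : ℕ} (hq : q < n) :
    spb v1 v2 b (tau v1 v2 b n q) = spb v1 v2 b (n-1-q) := by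
  have h := tau_spec hv1 hv2 hb hvb hq
  have hj : spb v1 v2 b (n-1-q) < v1 := spb_lt hv1 hv2 _
  exact (spb_char hv2 hb hvb (tau_lt hv1 hv2 hb hvb hq) hj).2 ⟨h.1, h.2.1⟩

/-- tau is (strictly) monotone on each superblock of mirrored positions -/
lemma tau_mono_block {q q' : ℕ} (hq : q < n) (hq' : q' < n) (hle : q ≤ q')
    (hblock : spb v1 v2 b (n-1-q) = spb v1 v2 b (n-1-q')) :
    tau v1 v2 b n q ≤ tau v1 v2 b n q' ∧ (q < q' → tau v1 v2 b n q < tau v1 v2 b n q') := by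
  have h1 := tau_spec hv1 hv2 hb hvb hq
  have h2 := tau_spec hv1 hv2 hb hvb hq'
  unfold tau at h1 h2 ⊢
  rw [hblock] at h1 ⊢
  omega

/-- tau is injective below n -/
lemma tau_inj {q q' : ℕ} (hq : q < n) (hq' : q' < n)
    (heq : tau v1 v2 b n q = tau v1 v2 b n q') : q = q' := by
  by_cases hblock : spb v1 v2 b (n-1-q) = spb v1 v2 b (n-1-q')
  · rcases Nat.lt_trichotomy q q' with h | h | h
    · exact absurd heq (Nat.ne_of_lt ((tau_mono_block hv1 hv2 hb hvb hq hq' h.le hblock).2 h))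
    · exact h
    · exact absurd heq.symm
        (Nat.ne_of_lt ((tau_mono_block hv1 hv2 hb hvb hq' hq h.le hblock.symm).2 h))
  · exfalso
    apply hblock
    rw [← spb_tau hv1 hv2 hb hvb hq, ← spb_tau hv1 hv2 hb hvb hq', heq]

end Tau

end Geometry



section Paste

variable {D : Type} {m kf kb : ℕ}

def isS (kf kb : ℕ) (i : Fin (2*kf+2*kb)) : Prop :=
  i.val < kf ∨ (2*kf ≤ i.val ∧ i.val < 2*kf + kb)

lemma streamOf_pos {S T : List D} {i : Fin (2*kf+2*kb)} (h : isS kf kb i) :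
    streamOf S T i = S := if_pos h

lemma streamOf_neg {S T : List D} {i : Fin (2*kf+2*kb)} (h : ¬ isS kf kb i) :
    streamOf S T i = T := if_neg h

variable (A : MP2S D m kf kb) {n : ℕ}
variable {S₁ T₁ S₂ T₂ : List D}

section PasteCtx

variable
  (hS1 : S₁.length = n) (hT1 : T₁.length = n) (hS2 : S₂.length = n) (hT2 : T₂.length = n)
  (InR : Fin (2*kf+2*kb) → ℕ → Prop)
  (hlt : ∀ i p, InR i p → p < n)
  (hconv : ∀ i p q r, p ≤ q → q ≤ r → InR i p → InR i r → InR i q)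

/-- nobody on the T side is in the region -/
def noT (InR : Fin (2*kf+2*kb) → ℕ → Prop) (x : A.Q × (Fin (2*kf+2*kb) → ℕ)) : Prop :=
  ∀ i, ¬ isS kf kb i → ¬ InR i (x.2 i)

def noS (InR : Fin (2*kf+2*kb) → ℕ → Prop) (x : A.Q × (Fin (2*kf+2*kb) → ℕ)) : Prop :=
  ∀ i, isS kf kb i → ¬ InR i (x.2 i)

variable
  (hstep1 : ∀ x : A.Q × (Fin (2*kf+2*kb) → ℕ),
      noT A InR x → A.step S₁ T₂ x = A.step S₁ T₁ x)
  (hstep2 : ∀ x : A.Q × (Fin (2*kf+2*kb) → ℕ),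
      noS A InR x → A.step S₁ T₂ x = A.step S₂ T₂ x)
  (hsafe1 : ∀ t, noS A InR (A.run S₁ T₁ t) ∨ noT A InR (A.run S₁ T₁ t))
  (hsafe2 : ∀ t, noS A InR (A.run S₂ T₂ t) ∨ noT A InR (A.run S₂ T₂ t))
  (htr_iff : ∀ i, (∃ t, InR i ((A.run S₁ T₁ t).2 i)) ↔ (∃ t, InR i ((A.run S₂ T₂ t).2 i)))
  (htr_eq : ∀ i, (∃ t, InR i ((A.run S₁ T₁ t).2 i)) →
      A.run S₁ T₁ (sInf {t | InR i ((A.run S₁ T₁ t).2 i)}) =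
        A.run S₂ T₂ (sInf {t | InR i ((A.run S₂ T₂ t).2 i)}))
  (E1 E2 : ℕ)
  (hE1d : Done S₁ T₁ (A.run S₁ T₁ E1).2) (hE1a : (A.run S₁ T₁ E1).1 ∈ A.accept)
  (hE2d : Done S₂ T₂ (A.run S₂ T₂ E2).2) (hE2a : (A.run S₂ T₂ E2).1 ∈ A.accept)

include hT1 hT2 in
/-- length agreement between mixed input and first input -/
lemma hlen1 : ∀ i : Fin (2*kf+2*kb),
    (streamOf S₁ T₂ i).length = (streamOf S₁ T₁ i).length := by
  intro i
  by_cases h : isS kf kb i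
  · rw [streamOf_pos h, streamOf_pos h]
  · rw [streamOf_neg h, streamOf_neg h, hT2, hT1]

include hS1 hS2 in
lemma hlen2 : ∀ i : Fin (2*kf+2*kb),
    (streamOf S₁ T₂ i).length = (streamOf S₂ T₂ i).length := by
  intro i
  by_cases h : isS kf kb i
  · rw [streamOf_pos h, streamOf_pos h, hS1, hS2]
  · rw [streamOf_neg h, streamOf_neg h]

include hT1 hT2 in
lemma done1 (x : A.Q × (Fin (2*kf+2*kb) → ℕ)) :
    Done S₁ T₂ x.2 ↔ Done S₁ T₁ x.2 := by
  have hl := hlen1 (kf := kf) (kb := kb) (S₁ := S₁) hT1 hT2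
  unfold MP2S.Done
  constructor <;> intro h i
  · rw [← hl i]; exact h i
  · rw [hl i]; exact h i

include hS1 hS2 in
lemma done2 (x : A.Q × (Fin (2*kf+2*kb) → ℕ)) :
    Done S₁ T₂ x.2 ↔ Done S₂ T₂ x.2 := by
  have hl := hlen2 (kf := kf) (kb := kb) (T₂ := T₂) hS1 hS2
  unfold MP2S.Done
  constructor <;> intro h i
  · rw [← hl i]; exact h i
  · rw [hl i]; exact h i

include hT1 hT2 hstep1 in
lemma follow1 {s a : ℕ} (hM : A.run S₁ T₂ s = A.run S₁ T₁ a) (j : ℕ)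
    (h : ∀ u, a ≤ u → u < a + j → noT A InR (A.run S₁ T₁ u)) :
    A.run S₁ T₂ (s + j) = A.run S₁ T₁ (a + j) := by
  induction j with
  | zero => exact hM
  | succ j ih =>
    have hj : A.run S₁ T₂ (s + j) = A.run S₁ T₁ (a + j) :=
      ih (fun u hu hu' => h u hu (by omega))
    have : s + (j + 1) = (s + j) + 1 := by omega
    rw [this, run_succ, hj, hstep1 _ (h (a+j) (by omega) (by omega))]
    rw [← run_succ]
    congr 1

include hS1 hS2 hstep2 in
lemma follow2 {s a : ℕ} (hM : A.run S₁ T₂ s = A.run S₂ T₂ a) (j : ℕ)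
    (h : ∀ u, a ≤ u → u < a + j → noS A InR (A.run S₂ T₂ u)) :
    A.run S₁ T₂ (s + j) = A.run S₂ T₂ (a + j) := by
  induction j with
  | zero => exact hM
  | succ j ih =>
    have hj : A.run S₁ T₂ (s + j) = A.run S₂ T₂ (a + j) :=
      ih (fun u hu hu' => h u hu (by omega))
    have : s + (j + 1) = (s + j) + 1 := by omega
    rw [this, run_succ, hj, hstep2 _ (h (a+j) (by omega) (by omega))]
    rw [← run_succ]
    congr 1

include hconv in
/-- identification of a first-entry time -/
lemma entry_ident {S T : List D} {g : Fin (2*kf+2*kb)} {a e : ℕ} (hae : a < e)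
    (hIn : InR g ((A.run S T e).2 g))
    (hnot : ∀ u, a ≤ u → u < e → ¬ InR g ((A.run S T u).2 g)) :
    sInf {t | InR g ((A.run S T t).2 g)} = e := by
  have hmem : e ∈ {t | InR g ((A.run S T t).2 g)} := hIn
  have hne : {t | InR g ((A.run S T t).2 g)}.Nonempty := ⟨e, hmem⟩
  have hle : sInf {t | InR g ((A.run S T t).2 g)} ≤ e := Nat.sInf_le hmem
  rcases eq_or_lt_of_le hle with h | h
  · exact h
  · exfalso
    have hmem' := Nat.sInf_mem hne
    set e₀ := sInf {t | InR g ((A.run S T t).2 g)} with he₀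
    have : ¬ InR g ((A.run S T e₀).2 g) := by
      rcases lt_or_ge e₀ a with h' | h'
      · intro hcon
        exact hnot a le_rfl hae
          (hconv g _ _ _ (pos_mono A S T g h'.le) (pos_mono A S T g hae.le) hcon hIn)
      · exact hnot e₀ h' h
    exact this hmem'

include hS1 hT1 hlt hE1d in
lemma not_done_of_inR {g : Fin (2*kf+2*kb)} {t : ℕ}
    (hIn : InR g ((A.run S₁ T₁ t).2 g)) : t < E1 := by
  by_contra hcon
  push_neg at hcon
  have := done_stable A S₁ T₁ hE1d t hcon
  rw [this] at hIn
  have hpos := (done_iff A S₁ T₁ E1).1 hE1d g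
  have hlen : (streamOf S₁ T₁ g).length = n := by
    by_cases h : isS kf kb g
    · rw [streamOf_pos h]; exact hS1
    · rw [streamOf_neg h]; exact hT1
  rw [hpos, hlen] at hIn
  exact absurd (hlt g n hIn) (lt_irrefl n)

include hS1 hT1 hS2 hT2 hlt hconv hstep2 hsafe1 hsafe2 htr_iff htr_eq hE2d hE2a in
lemma excursion {s bb : ℕ} {g : Fin (2*kf+2*kb)}
    (hM : A.run S₁ T₂ s = A.run S₂ T₂ bb)
    (hnoS : noS A InR (A.run S₂ T₂ bb))
    (hgT : ¬ isS kf kb g)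
    (hg2 : ∃ t, InR g ((A.run S₂ T₂ t).2 g))
    (hgle : sInf {t | InR g ((A.run S₂ T₂ t).2 g)} ≤ bb) :
    A.Accepts S₁ T₂ ∨
      ∃ s' a', A.run S₁ T₂ s' = A.run S₁ T₁ a' ∧ noT A InR (A.run S₁ T₁ a') ∧
        (∃ t, InR g ((A.run S₁ T₁ t).2 g)) ∧
        sInf {t | InR g ((A.run S₁ T₁ t).2 g)} < a' := by
  by_cases hall : ∀ u, bb ≤ u → noS A InR (A.run S₂ T₂ u)
  · left
    rcases le_or_gt bb E2 with hcase | hcase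
    · have hfol := follow2 A hS1 hS2 InR hstep2 hM (E2 - bb) (fun u hu _ => hall u hu)
      have hbe : bb + (E2 - bb) = E2 := by omega
      rw [hbe] at hfol
      exact ⟨s + (E2 - bb), (done2 A hS1 hS2 _).2 (by rw [hfol]; exact hE2d),
        by rw [hfol]; exact hE2a⟩
    · have hstab := done_stable A S₂ T₂ hE2d bb hcase.le
      exact ⟨s, (done2 A hS1 hS2 _).2 (by rw [hM, hstab]; exact hE2d),
        by rw [hM, hstab]; exact hE2a⟩
  · push_neg at hall
    obtain ⟨u₀, hu₀le, hu₀⟩ := hall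
    unfold noS at hu₀
    push_neg at hu₀
    obtain ⟨j₀, hj₀S, hj₀In⟩ := hu₀
    have hu₀gt : bb < u₀ := by
      rcases eq_or_lt_of_le hu₀le with h | h
      · exact absurd hj₀In (by rw [← h]; exact hnoS j₀ hj₀S)
      · exact h
    set Q := {u | bb < u ∧ ∃ i, isS kf kb i ∧ InR i ((A.run S₂ T₂ u).2 i)} with hQdef
    have hQne : Q.Nonempty := ⟨u₀, hu₀gt, j₀, hj₀S, hj₀In⟩
    set e' := sInf Q with he'def
    have he'mem : e' ∈ Q := Nat.sInf_mem hQne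
    have hmin : ∀ t, bb ≤ t → t < e' → noS A InR (A.run S₂ T₂ t) := by
      intro t hbt hte
      rcases eq_or_lt_of_le hbt with h | h
      · rw [← h]; exact hnoS
      · have hnq : t ∉ Q := Nat.notMem_of_lt_sInf hte
        intro i hiS hiIn
        exact hnq ⟨h, i, hiS, hiIn⟩
    have hblt : bb < e' := he'mem.1
    have hfol := follow2 A hS1 hS2 InR hstep2 hM (e' - bb)
      (fun u hu hu' => hmin u hu (by omega))
    have hbe : bb + (e' - bb) = e' := by omega
    rw [hbe] at hfol
    obtain ⟨i₀, hi₀S, hi₀In⟩ := he'mem.2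
    have hident : sInf {t | InR i₀ ((A.run S₂ T₂ t).2 i₀)} = e' :=
      entry_ident A InR hconv he'mem.1 hi₀In
        (fun u hu hu' => hmin u hu hu' i₀ hi₀S)
    have h2ent : ∃ t, InR i₀ ((A.run S₂ T₂ t).2 i₀) := ⟨e', hi₀In⟩
    have h1ent : ∃ t, InR i₀ ((A.run S₁ T₁ t).2 i₀) := (htr_iff i₀).2 h2ent
    have hcfg := htr_eq i₀ h1ent
    rw [hident] at hcfg
    -- hcfg : R1 (sInf ent1 i₀) = R2 e'
    set a' := sInf {t | InR i₀ ((A.run S₁ T₁ t).2 i₀)} with ha'def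
    have hM' : A.run S₁ T₂ (s + (e' - bb)) = A.run S₁ T₁ a' := hfol.trans hcfg.symm
    have hnoT' : noT A InR (A.run S₁ T₁ a') := by
      rcases hsafe1 a' with h | h
      · exfalso
        have : InR i₀ ((A.run S₁ T₁ a').2 i₀) := by rw [hcfg]; exact hi₀In
        exact h i₀ hi₀S this
      · exact h
    right
    have hg1 : ∃ t, InR g ((A.run S₁ T₁ t).2 g) := (htr_iff g).2 hg2
    refine ⟨s + (e' - bb), a', hM', hnoT', hg1, ?_⟩
    -- strictness
    have hcfgg := htr_eq g hg1
    set eg1 := sInf {t | InR g ((A.run S₁ T₁ t).2 g)} with heg1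
    set eg2 := sInf {t | InR g ((A.run S₂ T₂ t).2 g)} with heg2
    have hp₀In : InR g ((A.run S₂ T₂ eg2).2 g) := Nat.sInf_mem hg2
    have hPge : (A.run S₂ T₂ eg2).2 g ≤ (A.run S₂ T₂ e').2 g :=
      pos_mono A S₂ T₂ g (le_trans hgle (le_of_lt he'mem.1))
    have hPnot : ¬ InR g ((A.run S₂ T₂ e').2 g) := by
      have := hnoT' g hgT
      rw [hcfg] at this
      exact this
    have hplt : (A.run S₂ T₂ eg2).2 g < (A.run S₂ T₂ e').2 g := by
      rcases eq_or_lt_of_le hPge with h | h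
      · exact absurd (h ▸ hp₀In) hPnot
      · exact h
    by_contra hcon
    push_neg at hcon
    have h1 : (A.run S₁ T₁ a').2 g ≤ (A.run S₁ T₁ eg1).2 g := pos_mono A S₁ T₁ g hcon
    have h2 : (A.run S₁ T₁ eg1).2 g = (A.run S₂ T₂ eg2).2 g := by rw [hcfgg]
    have h3 : (A.run S₁ T₁ a').2 g = (A.run S₂ T₂ e').2 g := by rw [hcfg]
    omega

include hS1 hT1 hS2 hT2 hlt hconv hstep1 hstep2 hsafe1 hsafe2 htr_iff htr_eq
  hE1d hE1a hE2d hE2a in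
lemma main1 : ∀ d a s, A.run S₁ T₂ s = A.run S₁ T₁ a → noT A InR (A.run S₁ T₁ a) →
    E1 ≤ a + d → A.Accepts S₁ T₂ := by
  intro d
  induction d using Nat.strong_induction_on with
  | _ d ih =>
    intro a s hM hnoT hd
    rcases le_or_gt E1 a with hcase | hcase
    · have hstab := done_stable A S₁ T₁ hE1d a hcase
      exact ⟨s, (done1 A hT1 hT2 _).2 (by rw [hM, hstab]; exact hE1d),
        by rw [hM, hstab]; exact hE1a⟩
    by_cases hall : ∀ u, a ≤ u → noT A InR (A.run S₁ T₁ u)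
    · have hfol := follow1 A hT1 hT2 InR hstep1 hM (E1 - a) (fun u hu _ => hall u hu)
      have hbe : a + (E1 - a) = E1 := by omega
      rw [hbe] at hfol
      exact ⟨s + (E1 - a), (done1 A hT1 hT2 _).2 (by rw [hfol]; exact hE1d),
        by rw [hfol]; exact hE1a⟩
    · push_neg at hall
      obtain ⟨u₀, hu₀le, hu₀⟩ := hall
      unfold noT at hu₀
      push_neg at hu₀
      obtain ⟨g, hgT, hgIn⟩ := hu₀
      have hu₀gt : a < u₀ := by
        rcases eq_or_lt_of_le hu₀le with h | h
        · exact absurd hgIn (by rw [← h]; exact hnoT g hgT)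
        · exact h
      set Q := {u | a < u ∧ ∃ i, ¬ isS kf kb i ∧ InR i ((A.run S₁ T₁ u).2 i)} with hQdef
      have hQne : Q.Nonempty := ⟨u₀, hu₀gt, g, hgT, hgIn⟩
      set e := sInf Q with hedef
      have hemem : e ∈ Q := Nat.sInf_mem hQne
      have hmin : ∀ t, a ≤ t → t < e → noT A InR (A.run S₁ T₁ t) := by
        intro t hat hte
        rcases eq_or_lt_of_le hat with h | h
        · rw [← h]; exact hnoT
        · have hnq : t ∉ Q := Nat.notMem_of_lt_sInf hte
          intro i hiT hiIn
          exact hnq ⟨h, i, hiT, hiIn⟩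
      have halt : a < e := hemem.1
      have hfol := follow1 A hT1 hT2 InR hstep1 hM (e - a)
        (fun u hu hu' => hmin u hu (by omega))
      have hbe : a + (e - a) = e := by omega
      rw [hbe] at hfol
      obtain ⟨g₀, hg₀T, hg₀In⟩ := hemem.2
      have hident : sInf {t | InR g₀ ((A.run S₁ T₁ t).2 g₀)} = e :=
        entry_ident A InR hconv hemem.1 hg₀In
          (fun u hu hu' => hmin u hu hu' g₀ hg₀T)
      have h1ent : ∃ t, InR g₀ ((A.run S₁ T₁ t).2 g₀) := ⟨e, hg₀In⟩
      have h2ent : ∃ t, InR g₀ ((A.run S₂ T₂ t).2 g₀) := (htr_iff g₀).1 h1ent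
      have hcfg := htr_eq g₀ h1ent
      rw [hident] at hcfg
      -- hcfg : R1 e = R2 (sInf ent2 g₀)
      have hnoS2 : noS A InR (A.run S₂ T₂ (sInf {t | InR g₀ ((A.run S₂ T₂ t).2 g₀)})) := by
        rcases hsafe2 (sInf {t | InR g₀ ((A.run S₂ T₂ t).2 g₀)}) with h | h
        · exact h
        · exfalso
          have : InR g₀ ((A.run S₂ T₂ (sInf {t | InR g₀ ((A.run S₂ T₂ t).2 g₀)})).2 g₀) := by
            rw [← hcfg]; exact hg₀In
          exact h g₀ hg₀T this
      have hM2 : A.run S₁ T₂ (s + (e - a)) =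
          A.run S₂ T₂ (sInf {t | InR g₀ ((A.run S₂ T₂ t).2 g₀)}) := hfol.trans hcfg
      rcases excursion A hS1 hT1 hS2 hT2 InR hlt hconv hstep2 hsafe1 hsafe2 htr_iff htr_eq
          E2 hE2d hE2a hM2 hnoS2 hg₀T h2ent le_rfl with hacc | ⟨s', a', hM', hnoT', _, hlt'⟩
      · exact hacc
      · rw [hident] at hlt'
        have haa' : a < a' := lt_trans hemem.1 hlt'
        have hd1 : 1 ≤ d := by omega
        exact ih (d-1) (by omega) a' s' hM' hnoT' (by omega)

include hS1 hT1 hS2 hT2 hlt hconv hstep1 hstep2 hsafe1 hsafe2 htr_iff htr_eq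
  hE1d hE1a hE2d hE2a in
lemma paste_accepts : A.Accepts S₁ T₂ := by
  have hinit : A.run S₁ T₂ 0 = A.run S₁ T₁ 0 := rfl
  by_cases h0 : noT A InR (A.run S₁ T₁ 0)
  · exact main1 A hS1 hT1 hS2 hT2 InR hlt hconv hstep1 hstep2 hsafe1 hsafe2 htr_iff htr_eq
      E1 E2 hE1d hE1a hE2d hE2a E1 0 0 hinit h0 (by omega)
  · unfold noT at h0
    push_neg at h0
    obtain ⟨g, hgT, hgIn⟩ := h0
    have h1ent : ∃ t, InR g ((A.run S₁ T₁ t).2 g) := ⟨0, hgIn⟩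
    have hident : sInf {t | InR g ((A.run S₁ T₁ t).2 g)} = 0 :=
      Nat.le_antisymm (Nat.sInf_le hgIn) (Nat.zero_le _)
    have h2ent : ∃ t, InR g ((A.run S₂ T₂ t).2 g) := (htr_iff g).1 h1ent
    have hcfg := htr_eq g h1ent
    rw [hident] at hcfg
    have hnoS2 : noS A InR (A.run S₂ T₂ (sInf {t | InR g ((A.run S₂ T₂ t).2 g)})) := by
      rcases hsafe2 (sInf {t | InR g ((A.run S₂ T₂ t).2 g)}) with h | h
      · exact h
      · exfalso
        have : InR g ((A.run S₂ T₂ (sInf {t | InR g ((A.run S₂ T₂ t).2 g)})).2 g) := by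
          rw [← hcfg]; exact hgIn
        exact h g hgT this
    have hM2 : A.run S₁ T₂ 0 = A.run S₂ T₂ (sInf {t | InR g ((A.run S₂ T₂ t).2 g)}) := by
      rw [hinit, ← hcfg]
    rcases excursion A hS1 hT1 hS2 hT2 InR hlt hconv hstep2 hsafe1 hsafe2 htr_iff htr_eq
        E2 hE2d hE2a hM2 hnoS2 hgT h2ent le_rfl with hacc | ⟨s', a', hM', hnoT', _, hlt'⟩
    · exact hacc
    · exact main1 A hS1 hT1 hS2 hT2 InR hlt hconv hstep1 hstep2 hsafe1 hsafe2 htr_iff htr_eq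
        E1 E2 hE1d hE1a hE2d hE2a E1 a' s' hM' hnoT' (by omega)

end PasteCtx

end Paste


section Concrete

variable {D : Type} {m kf kb : ℕ} (A : MP2S D m kf kb)
variable (v1 v2 b n : ℕ)

/-- index of the data item scanned by head `i` at advance count `p` (for `p < n`) -/
def idxOf (i : Fin (2*kf+2*kb)) (p : ℕ) : ℕ :=
  if i.val < 2*kf then (if i.val < kf then p else tau v1 v2 b n p)
  else (if i.val < 2*kf + kb then n - 1 - p else tau v1 v2 b n (n - 1 - p))

/-- head `i` currently scans an item of subblock `c` -/
def InRc (c : ℕ) (i : Fin (2*kf+2*kb)) (p : ℕ) : Prop :=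
  p < n ∧ sbl v1 v2 b (idxOf v1 v2 b n i p) = c

lemma InRc_lt {c : ℕ} {i : Fin (2*kf+2*kb)} {p : ℕ} (h : InRc v1 v2 b n c i p) : p < n :=
  h.1

section ConvexMono

variable {v1 v2 b n : ℕ}
variable (hv1 : 1 ≤ v1) (hv2 : 1 ≤ v2) (hb : 1 ≤ b) (hvb : v1 * v2 * b ≤ n)

lemma flipflip {p : ℕ} (hp : p < n) : n - 1 - (n - 1 - p) = p := by omega

include hv1 hv2 hb hvb in
lemma InRc_convex {c : ℕ} (i : Fin (2*kf+2*kb)) (p q r : ℕ) (hpq : p ≤ q) (hqr : q ≤ r)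
    (hp : InRc v1 v2 b n c i p) (hr : InRc v1 v2 b n c i r) : InRc v1 v2 b n c i q := by
  obtain ⟨hpn, hps⟩ := hp
  obtain ⟨hrn, hrs⟩ := hr
  have hqn : q < n := lt_of_le_of_lt hqr hrn
  have hn1 : 1 ≤ n := by
    have := Nat.mul_le_mul (Nat.mul_le_mul hv1 hv2) hb
    omega
  refine ⟨hqn, ?_⟩
  unfold idxOf at hps hrs ⊢
  by_cases h2 : i.val < 2*kf
  · rw [if_pos h2] at hps hrs ⊢
    by_cases h1 : i.val < kf
    · rw [if_pos h1] at hps hrs ⊢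
      have h₁ : sbl v1 v2 b p ≤ sbl v1 v2 b q := sbl_mono hpq
      have h₂ : sbl v1 v2 b q ≤ sbl v1 v2 b r := sbl_mono hqr
      omega
    · rw [if_neg h1] at hps hrs ⊢
      -- forward head on T
      have hsp : spb v1 v2 b (n-1-p) = c / v2 := by
        rw [← spb_tau hv1 hv2 hb hvb hpn, spb_def, hps]
      have hsr : spb v1 v2 b (n-1-r) = c / v2 := by
        rw [← spb_tau hv1 hv2 hb hvb hrn, spb_def, hrs]
      have hsq : spb v1 v2 b (n-1-q) = c / v2 := by
        have h₁ : spb v1 v2 b (n-1-r) ≤ spb v1 v2 b (n-1-q) := spb_mono (by omega)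
        have h₂ : spb v1 v2 b (n-1-q) ≤ spb v1 v2 b (n-1-p) := spb_mono (by omega)
        omega
      have t₁ := (tau_mono_block hv1 hv2 hb hvb hpn hqn hpq (by rw [hsp, hsq])).1
      have t₂ := (tau_mono_block hv1 hv2 hb hvb hqn hrn hqr (by rw [hsq, hsr])).1
      have h₁ : sbl v1 v2 b (tau v1 v2 b n p) ≤ sbl v1 v2 b (tau v1 v2 b n q) := sbl_mono t₁
      have h₂ : sbl v1 v2 b (tau v1 v2 b n q) ≤ sbl v1 v2 b (tau v1 v2 b n r) := sbl_mono t₂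
      omega
  · rw [if_neg h2] at hps hrs ⊢
    by_cases h1 : i.val < 2*kf + kb
    · rw [if_pos h1] at hps hrs ⊢
      have h₁ : sbl v1 v2 b (n-1-r) ≤ sbl v1 v2 b (n-1-q) := sbl_mono (by omega)
      have h₂ : sbl v1 v2 b (n-1-q) ≤ sbl v1 v2 b (n-1-p) := sbl_mono (by omega)
      omega
    · rw [if_neg h1] at hps hrs ⊢
      -- backward head on T
      have hpn' : n - 1 - p < n := by omega
      have hqn' : n - 1 - q < n := by omega
      have hrn' : n - 1 - r < n := by omega
      have hsp : spb v1 v2 b p = c / v2 := by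
        rw [← flipflip hpn, ← spb_tau hv1 hv2 hb hvb hpn', spb_def, hps]
      have hsr : spb v1 v2 b r = c / v2 := by
        rw [← flipflip hrn, ← spb_tau hv1 hv2 hb hvb hrn', spb_def, hrs]
      have hsq : spb v1 v2 b q = c / v2 := by
        have h₁ : spb v1 v2 b p ≤ spb v1 v2 b q := spb_mono hpq
        have h₂ : spb v1 v2 b q ≤ spb v1 v2 b r := spb_mono hqr
        omega
      have t₁ := (tau_mono_block hv1 hv2 hb hvb hrn' hqn' (by omega)
        (by rw [flipflip hrn, flipflip hqn, hsr, hsq])).1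
      have t₂ := (tau_mono_block hv1 hv2 hb hvb hqn' hpn' (by omega)
        (by rw [flipflip hqn, flipflip hpn, hsq, hsp])).1
      have h₁ : sbl v1 v2 b (tau v1 v2 b n (n-1-r)) ≤ sbl v1 v2 b (tau v1 v2 b n (n-1-q)) :=
        sbl_mono t₁
      have h₂ : sbl v1 v2 b (tau v1 v2 b n (n-1-q)) ≤ sbl v1 v2 b (tau v1 v2 b n (n-1-p)) :=
        sbl_mono t₂
      omega

end ConvexMono

end Concrete

section Safety

variable {D : Type} {m kf kb : ℕ} (A : MP2S D m kf kb)
variable {v1 v2 b n : ℕ}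
variable (hv1 : 1 ≤ v1) (hv2 : 1 ≤ v2) (hb : 1 ≤ b) (hvb : v1 * v2 * b ≤ n)

-- abbreviations for head-type conditions on indices
-- fS : i.val < kf ; fT : kf ≤ i.val < 2kf ; bS : 2kf ≤ i.val < 2kf+kb ; bT : 2kf+kb ≤ i.val

include hv1 hv2 hb hvb in
lemma idx_spb_fT {i : Fin (2*kf+2*kb)} (h1 : kf ≤ i.val) (h2 : i.val < 2*kf) {p : ℕ}
    (hp : p < n) : spb v1 v2 b (idxOf v1 v2 b n i p) = spb v1 v2 b (n - 1 - p) := by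
  unfold idxOf
  rw [if_pos h2, if_neg (by omega)]
  exact spb_tau hv1 hv2 hb hvb hp

include hv1 hv2 hb hvb in
lemma idx_spb_bT {i : Fin (2*kf+2*kb)} (h1 : 2*kf + kb ≤ i.val) {p : ℕ}
    (hp : p < n) : spb v1 v2 b (idxOf v1 v2 b n i p) = spb v1 v2 b p := by
  unfold idxOf
  rw [if_neg (by omega), if_neg (by omega)]
  rw [spb_tau hv1 hv2 hb hvb (by omega : n - 1 - p < n), flipflip hp]

lemma idx_fS {i : Fin (2*kf+2*kb)} (h1 : i.val < kf) (p : ℕ) :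
    idxOf v1 v2 b n i p = p := by
  unfold idxOf
  rw [if_pos (by omega), if_pos h1]

lemma idx_fT {i : Fin (2*kf+2*kb)} (h1 : kf ≤ i.val) (h2 : i.val < 2*kf) (p : ℕ) :
    idxOf v1 v2 b n i p = tau v1 v2 b n p := by
  unfold idxOf
  rw [if_pos h2, if_neg (by omega)]

lemma idx_bS {i : Fin (2*kf+2*kb)} (h1 : 2*kf ≤ i.val) (h2 : i.val < 2*kf + kb) (p : ℕ) :
    idxOf v1 v2 b n i p = n - 1 - p := by
  unfold idxOf
  rw [if_neg (by omega), if_pos (by omega)]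

lemma idx_bT {i : Fin (2*kf+2*kb)} (h1 : 2*kf + kb ≤ i.val) (p : ℕ) :
    idxOf v1 v2 b n i p = tau v1 v2 b n (n - 1 - p) := by
  unfold idxOf
  rw [if_neg (by omega), if_neg (by omega)]

include hv1 hv2 hb hvb in
lemma exists_safe (hc1 : kf*kf + kb*kb < v1) (hc2 : kf*kb + kb*kf < v2)
    (S T : List D) (hS : S.length = n) (hT : T.length = n) :
    ∃ c : ℕ, c < v1*v2 ∧ ∀ t,
      noS A (InRc v1 v2 b n c) (A.run S T t) ∨ noT A (InRc v1 v2 b n c) (A.run S T t) := by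
  classical
  have hn1 : 1 ≤ n := le_trans (Nat.one_le_iff_ne_zero.2 (by positivity)) hvb
  have hposn : ∀ t (i : Fin (2*kf+2*kb)), (A.run S T t).2 i ≤ n := by
    intro t i
    have h := pos_le A S T t i
    by_cases hi : isS kf kb i
    · rwa [streamOf_pos hi, hS] at h
    · rwa [streamOf_neg hi, hT] at h
  set pf : ℕ → Fin (2*kf+2*kb) → ℕ := fun t i => (A.run S T t).2 i with hpf
  -- sentinel trajectories at superblock level
  set Fup : Fin (2*kf+2*kb) → ℕ → ℕ := fun i t =>
    if pf t i < n then spb v1 v2 b (idxOf v1 v2 b n i (pf t i)) else v1 with hFup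
  set Fdn : Fin (2*kf+2*kb) → ℕ → ℕ := fun i t =>
    if pf t i < n then spb v1 v2 b (idxOf v1 v2 b n i (pf t i)) else 0 with hFdn
  have hpfmono : ∀ i, Monotone (fun t => pf t i) := fun i => pos_mono A S T i
  have hupfS : ∀ i : Fin (2*kf+2*kb), i.val < kf → Monotone (Fup i) := by
    intro i hi t t' htt
    simp only [hFup]
    have hm : pf t i ≤ pf t' i := hpfmono i htt
    rw [idx_fS hi, idx_fS hi]
    by_cases h2 : pf t' i < n
    · rw [if_pos (lt_of_le_of_lt hm h2), if_pos h2]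
      exact spb_mono hm
    · rw [if_neg h2]
      split
      · exact le_of_lt (spb_lt hv1 hv2 _)
      · exact le_rfl
  have hupbT : ∀ i : Fin (2*kf+2*kb), 2*kf + kb ≤ i.val → Monotone (Fup i) := by
    intro i hi t t' htt
    simp only [hFup]
    have hm : pf t i ≤ pf t' i := hpfmono i htt
    by_cases h2 : pf t' i < n
    · have h1 : pf t i < n := lt_of_le_of_lt hm h2
      rw [if_pos h1, if_pos h2, idx_spb_bT hv1 hv2 hb hvb hi h1,
        idx_spb_bT hv1 hv2 hb hvb hi h2]
      exact spb_mono hm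
    · rw [if_neg h2]
      split
      · exact le_of_lt (spb_lt hv1 hv2 _)
      · exact le_rfl
  have hdnfT : ∀ i : Fin (2*kf+2*kb), kf ≤ i.val → i.val < 2*kf → Antitone (Fdn i) := by
    intro i hi hi' t t' htt
    simp only [hFdn]
    have hm : pf t i ≤ pf t' i := hpfmono i htt
    by_cases h2 : pf t' i < n
    · have h1 : pf t i < n := lt_of_le_of_lt hm h2
      rw [if_pos h1, if_pos h2, idx_spb_fT hv1 hv2 hb hvb hi hi' h1,
        idx_spb_fT hv1 hv2 hb hvb hi hi' h2]
      exact spb_mono (by omega)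
    · rw [if_neg h2]
      exact Nat.zero_le _
  have hdnbS : ∀ i : Fin (2*kf+2*kb), 2*kf ≤ i.val → i.val < 2*kf + kb →
      Antitone (Fdn i) := by
    intro i hi hi' t t' htt
    simp only [hFdn]
    have hm : pf t i ≤ pf t' i := hpfmono i htt
    by_cases h2 : pf t' i < n
    · have h1 : pf t i < n := lt_of_le_of_lt hm h2
      rw [if_pos h1, if_pos h2, idx_bS hi hi', idx_bS hi hi']
      exact spb_mono (by omega)
    · rw [if_neg h2]
      exact Nat.zero_le _
  -- uniqueness of shared superblocks for equi-rotational pairs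
  have supShare : ∀ (i1 i2 : Fin (2*kf+2*kb)) (t t' J J' : ℕ),
      ((i1.val < kf ∧ kf ≤ i2.val ∧ i2.val < 2*kf) ∨
       (2*kf ≤ i1.val ∧ i1.val < 2*kf+kb ∧ 2*kf+kb ≤ i2.val)) →
      pf t i1 < n → pf t i2 < n →
      spb v1 v2 b (idxOf v1 v2 b n i1 (pf t i1)) = J →
      spb v1 v2 b (idxOf v1 v2 b n i2 (pf t i2)) = J →
      pf t' i1 < n → pf t' i2 < n →
      spb v1 v2 b (idxOf v1 v2 b n i1 (pf t' i1)) = J' →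
      spb v1 v2 b (idxOf v1 v2 b n i2 (pf t' i2)) = J' → J = J' := by
    intro i1 i2 t t' J J' hpair ht1 ht2 hv1' hv2' ht1' ht2' hw1 hw2
    rcases hpair with ⟨h1, h2, h3⟩ | ⟨h1, h2, h3⟩
    · exact share_unique (hupfS i1 h1) (hdnfT i2 h2 h3)
        (x := J) (y := J')
        (by simp only [hFup]; rw [if_pos ht1]; exact hv1')
        (by simp only [hFdn]; rw [if_pos ht2]; exact hv2')
        (by simp only [hFup]; rw [if_pos ht1']; exact hw1)
        (by simp only [hFdn]; rw [if_pos ht2']; exact hw2)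
    · exact share_unique (hupbT i2 h3) (hdnbS i1 h1 h2)
        (x := J) (y := J')
        (by simp only [hFup]; rw [if_pos ht2]; exact hv2')
        (by simp only [hFdn]; rw [if_pos ht1]; exact hv1')
        (by simp only [hFup]; rw [if_pos ht2']; exact hw2)
        (by simp only [hFdn]; rw [if_pos ht1']; exact hw1)
  -- stage 1 : a superblock not shared by any equi-rotational pair
  have hgoodJ : ∃ J, J < v1 ∧ ∀ (i1 i2 : Fin (2*kf+2*kb)) t,
      ((i1.val < kf ∧ kf ≤ i2.val ∧ i2.val < 2*kf) ∨
       (2*kf ≤ i1.val ∧ i1.val < 2*kf+kb ∧ 2*kf+kb ≤ i2.val)) →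
      ¬(pf t i1 < n ∧ pf t i2 < n ∧
        spb v1 v2 b (idxOf v1 v2 b n i1 (pf t i1)) = J ∧
        spb v1 v2 b (idxOf v1 v2 b n i2 (pf t i2)) = J) := by
    by_contra hcon
    push_neg at hcon
    have hex : ∀ J : Fin v1, ∃ w : Fin (2*kf+2*kb) × Fin (2*kf+2*kb) × ℕ,
        ((w.1.val < kf ∧ kf ≤ w.2.1.val ∧ w.2.1.val < 2*kf) ∨
         (2*kf ≤ w.1.val ∧ w.1.val < 2*kf+kb ∧ 2*kf+kb ≤ w.2.1.val)) ∧
        (pf w.2.2 w.1 < n ∧ pf w.2.2 w.2.1 < n ∧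
          spb v1 v2 b (idxOf v1 v2 b n w.1 (pf w.2.2 w.1)) = J.val ∧
          spb v1 v2 b (idxOf v1 v2 b n w.2.1 (pf w.2.2 w.2.1)) = J.val) := by
      intro J
      obtain ⟨i1, i2, t, hp, hq⟩ := hcon J.val J.isLt
      exact ⟨⟨i1, i2, t⟩, hp, hq⟩
    choose w hw using hex
    set f : Fin v1 → (Fin kf × Fin kf) ⊕ (Fin kb × Fin kb) := fun J =>
      if h : (w J).1.val < kf then
        Sum.inl (⟨(w J).1.val, h⟩, ⟨(w J).2.1.val - kf, by
          rcases (hw J).1 with hh | hh <;> omega⟩)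
      else
        Sum.inr (⟨(w J).1.val - 2*kf, by rcases (hw J).1 with hh | hh <;> omega⟩,
          ⟨(w J).2.1.val - (2*kf+kb), by rcases (hw J).1 with hh | hh <;> omega⟩) with hfdef
    have hcard : Fintype.card ((Fin kf × Fin kf) ⊕ (Fin kb × Fin kb)) <
        Fintype.card (Fin v1) := by
      simpa using hc1
    obtain ⟨J, J', hne, heq⟩ := Fintype.exists_ne_map_eq_of_card_lt f hcard
    have hheads : (w J).1 = (w J').1 ∧ (w J).2.1 = (w J').2.1 := by
      simp only [hfdef] at heq
      by_cases hA : (w J).1.val < kf <;> by_cases hB : (w J').1.val < kf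
      · rw [dif_pos hA, dif_pos hB] at heq
        simp only [Sum.inl.injEq, Prod.mk.injEq, Fin.mk.injEq] at heq
        have h1 := (hw J).1
        have h2 := (hw J').1
        constructor <;> apply Fin.ext <;> rcases h1 with hh1|hh1 <;> rcases h2 with hh2|hh2 <;>
          omega
      · rw [dif_pos hA, dif_neg hB] at heq
        exact absurd heq (by simp)
      · rw [dif_neg hA, dif_pos hB] at heq
        exact absurd heq (by simp)
      · rw [dif_neg hA, dif_neg hB] at heq
        simp only [Sum.inr.injEq, Prod.mk.injEq, Fin.mk.injEq] at heq
        have h1 := (hw J).1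
        have h2 := (hw J').1
        constructor <;> apply Fin.ext <;> rcases h1 with hh1|hh1 <;> rcases h2 with hh2|hh2 <;>
          omega
    have hJJ : J.val = J'.val := by
      obtain ⟨hq1, hq2, hq3, hq4⟩ := (hw J).2
      obtain ⟨hr1, hr2, hr3, hr4⟩ := (hw J').2
      rw [← hheads.1] at hr1 hr3
      rw [← hheads.2] at hr2 hr4
      exact supShare (w J).1 (w J).2.1 (w J).2.2 (w J').2.2 J.val J'.val (hw J).1
        hq1 hq2 hq3 hq4 hr1 hr2 hr3 hr4
    exact hne (Fin.ext hJJ)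
  obtain ⟨J, hJlt, hJgood⟩ := hgoodJ
  -- uniqueness of shared subblocks inside a superblock for mixed pairs
  have mixShare : ∀ (i1 i2 : Fin (2*kf+2*kb)) (t t' c c' : ℕ),
      ((i1.val < kf ∧ 2*kf+kb ≤ i2.val) ∨
       (2*kf ≤ i1.val ∧ i1.val < 2*kf+kb ∧ kf ≤ i2.val ∧ i2.val < 2*kf)) →
      c / v2 = c' / v2 →
      pf t i1 < n → pf t i2 < n →
      sbl v1 v2 b (idxOf v1 v2 b n i1 (pf t i1)) = c →
      sbl v1 v2 b (idxOf v1 v2 b n i2 (pf t i2)) = c →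
      pf t' i1 < n → pf t' i2 < n →
      sbl v1 v2 b (idxOf v1 v2 b n i1 (pf t' i1)) = c' →
      sbl v1 v2 b (idxOf v1 v2 b n i2 (pf t' i2)) = c' → c = c' := by
    intro i1 i2 t t' c c' hpair hdiv ht1 ht2 hc1' hc2' ht1' ht2' hd1 hd2
    -- common facts
    have key : ∀ u u', u ≤ u' → ∀ x y, pf u i1 < n → pf u i2 < n → pf u' i1 < n →
        pf u' i2 < n →
        sbl v1 v2 b (idxOf v1 v2 b n i1 (pf u i1)) = x →
        sbl v1 v2 b (idxOf v1 v2 b n i2 (pf u i2)) = x →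
        sbl v1 v2 b (idxOf v1 v2 b n i1 (pf u' i1)) = y →
        sbl v1 v2 b (idxOf v1 v2 b n i2 (pf u' i2)) = y →
        x / v2 = y / v2 → x = y := by
      intro u u' huu x y hu1 hu2 hu1' hu2' hx1 hx2 hy1 hy2 hxy
      have hm1 : pf u i1 ≤ pf u' i1 := hpfmono i1 huu
      have hm2 : pf u i2 ≤ pf u' i2 := hpfmono i2 huu
      rcases hpair with ⟨h1, h2⟩ | ⟨h1, h2, h3, h4⟩
      · -- forward head on S , backward head on T : x ≤ y and y ≤ x
        rw [idx_fS h1] at hx1 hy1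
        rw [idx_bT h2] at hx2 hy2
        have hxley : x ≤ y := by
          have := sbl_mono (v1 := v1) (v2 := v2) (b := b) hm1
          omega
        -- backward on T : within the common superblock tau is antitone in time
        have hsb1 : spb v1 v2 b (pf u i2) = x / v2 := by
          rw [← flipflip hu2, ← spb_tau hv1 hv2 hb hvb (by omega : n - 1 - pf u i2 < n),
            spb_def, hx2]
        have hsb2 : spb v1 v2 b (pf u' i2) = y / v2 := by
          rw [← flipflip hu2', ← spb_tau hv1 hv2 hb hvb (by omega : n - 1 - pf u' i2 < n),
            spb_def, hy2]
        have hblk : spb v1 v2 b (n - 1 - (n - 1 - pf u' i2)) =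
            spb v1 v2 b (n - 1 - (n - 1 - pf u i2)) := by
          rw [flipflip hu2, flipflip hu2', hsb1, hsb2, hxy]
        have htau := (tau_mono_block hv1 hv2 hb hvb
          (by omega : n - 1 - pf u' i2 < n) (by omega : n - 1 - pf u i2 < n)
          (by omega) hblk).1
        have := sbl_mono (v1 := v1) (v2 := v2) (b := b) htau
        omega
      · -- backward head on S , forward head on T : y ≤ x and x ≤ y
        rw [idx_bS h1 h2] at hx1 hy1
        rw [idx_fT h3 h4] at hx2 hy2
        have hylex : y ≤ x := by
          have := sbl_mono (v1 := v1) (v2 := v2) (b := b)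
            (by omega : n - 1 - pf u' i1 ≤ n - 1 - pf u i1)
          omega
        have hsb1 : spb v1 v2 b (n - 1 - pf u i2) = x / v2 := by
          rw [← spb_tau hv1 hv2 hb hvb hu2, spb_def, hx2]
        have hsb2 : spb v1 v2 b (n - 1 - pf u' i2) = y / v2 := by
          rw [← spb_tau hv1 hv2 hb hvb hu2', spb_def, hy2]
        have hblk : spb v1 v2 b (n - 1 - pf u i2) = spb v1 v2 b (n - 1 - pf u' i2) := by
          rw [hsb1, hsb2, hxy]
        have htau := (tau_mono_block hv1 hv2 hb hvb hu2 hu2' hm2 hblk).1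
        have := sbl_mono (v1 := v1) (v2 := v2) (b := b) htau
        omega
    rcases le_total t t' with h | h
    · exact key t t' h c c' ht1 ht2 ht1' ht2' hc1' hc2' hd1 hd2 hdiv
    · exact (key t' t h c' c ht1' ht2' ht1 ht2 hd1 hd2 hc1' hc2' hdiv.symm).symm
  -- stage 2 : a subblock of J not shared by any mixed pair
  have hgoodc : ∃ c, c < v1*v2 ∧ c / v2 = J ∧ ∀ (i1 i2 : Fin (2*kf+2*kb)) t,
      ((i1.val < kf ∧ 2*kf+kb ≤ i2.val) ∨
       (2*kf ≤ i1.val ∧ i1.val < 2*kf+kb ∧ kf ≤ i2.val ∧ i2.val < 2*kf)) →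
      ¬(pf t i1 < n ∧ pf t i2 < n ∧
        sbl v1 v2 b (idxOf v1 v2 b n i1 (pf t i1)) = c ∧
        sbl v1 v2 b (idxOf v1 v2 b n i2 (pf t i2)) = c) := by
    have hclt : ∀ r : Fin v2, v2 * J + r.val < v1 * v2 := by
      intro r
      calc v2 * J + r.val < v2 * J + v2 := by omega
      _ = v2 * (J + 1) := by ring
      _ ≤ v2 * v1 := Nat.mul_le_mul_left _ (by omega)
      _ = v1 * v2 := Nat.mul_comm _ _
    have hcdiv : ∀ r : Fin v2, (v2 * J + r.val) / v2 = J := by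
      intro r
      rw [Nat.mul_add_div (by omega)]
      have : r.val / v2 = 0 := Nat.div_eq_of_lt r.isLt
      omega
    by_contra hcon
    push_neg at hcon
    have hex : ∀ r : Fin v2, ∃ w : Fin (2*kf+2*kb) × Fin (2*kf+2*kb) × ℕ,
        ((w.1.val < kf ∧ 2*kf+kb ≤ w.2.1.val) ∨
         (2*kf ≤ w.1.val ∧ w.1.val < 2*kf+kb ∧ kf ≤ w.2.1.val ∧ w.2.1.val < 2*kf)) ∧
        (pf w.2.2 w.1 < n ∧ pf w.2.2 w.2.1 < n ∧
          sbl v1 v2 b (idxOf v1 v2 b n w.1 (pf w.2.2 w.1)) = v2 * J + r.val ∧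
          sbl v1 v2 b (idxOf v1 v2 b n w.2.1 (pf w.2.2 w.2.1)) = v2 * J + r.val) := by
      intro r
      obtain ⟨i1, i2, t, hp, hq⟩ := hcon (v2 * J + r.val) (hclt r) (hcdiv r)
      exact ⟨⟨i1, i2, t⟩, hp, hq⟩
    choose w hw using hex
    set f : Fin v2 → (Fin kf × Fin kb) ⊕ (Fin kb × Fin kf) := fun r =>
      if h : (w r).1.val < kf then
        Sum.inl (⟨(w r).1.val, h⟩, ⟨(w r).2.1.val - (2*kf+kb), by
          rcases (hw r).1 with hh | hh <;> omega⟩)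
      else
        Sum.inr (⟨(w r).1.val - 2*kf, by rcases (hw r).1 with hh | hh <;> omega⟩,
          ⟨(w r).2.1.val - kf, by rcases (hw r).1 with hh | hh <;> omega⟩) with hfdef
    have hcard : Fintype.card ((Fin kf × Fin kb) ⊕ (Fin kb × Fin kf)) <
        Fintype.card (Fin v2) := by
      simpa using hc2
    obtain ⟨r, r', hne, heq⟩ := Fintype.exists_ne_map_eq_of_card_lt f hcard
    have hheads : (w r).1 = (w r').1 ∧ (w r).2.1 = (w r').2.1 := by
      simp only [hfdef] at heq
      by_cases hA : (w r).1.val < kf <;> by_cases hB : (w r').1.val < kf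
      · rw [dif_pos hA, dif_pos hB] at heq
        simp only [Sum.inl.injEq, Prod.mk.injEq, Fin.mk.injEq] at heq
        have h1 := (hw r).1
        have h2 := (hw r').1
        constructor <;> apply Fin.ext <;> rcases h1 with hh1|hh1 <;> rcases h2 with hh2|hh2 <;>
          omega
      · rw [dif_pos hA, dif_neg hB] at heq
        exact absurd heq (by simp)
      · rw [dif_neg hA, dif_pos hB] at heq
        exact absurd heq (by simp)
      · rw [dif_neg hA, dif_neg hB] at heq
        simp only [Sum.inr.injEq, Prod.mk.injEq, Fin.mk.injEq] at heq
        have h1 := (hw r).1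
        have h2 := (hw r').1
        constructor <;> apply Fin.ext <;> rcases h1 with hh1|hh1 <;> rcases h2 with hh2|hh2 <;>
          omega
    have hrr : v2 * J + r.val = v2 * J + r'.val := by
      obtain ⟨hq1, hq2, hq3, hq4⟩ := (hw r).2
      obtain ⟨hr1, hr2, hr3, hr4⟩ := (hw r').2
      rw [← hheads.1] at hr1 hr3
      rw [← hheads.2] at hr2 hr4
      exact mixShare (w r).1 (w r).2.1 (w r).2.2 (w r').2.2 _ _ (hw r).1
        (by rw [hcdiv r, hcdiv r']) hq1 hq2 hq3 hq4 hr1 hr2 hr3 hr4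
    exact hne (Fin.ext (by omega))
  obtain ⟨c, hclt, hcdiv, hcgood⟩ := hgoodc
  refine ⟨c, hclt, ?_⟩
  intro t
  by_contra hcontra
  push_neg at hcontra
  obtain ⟨hnoS, hnoT⟩ := hcontra
  unfold noS at hnoS
  push_neg at hnoS
  obtain ⟨i1, hi1S, hi1In⟩ := hnoS
  unfold noT at hnoT
  push_neg at hnoT
  obtain ⟨i2, hi2T, hi2In⟩ := hnoT
  obtain ⟨hp1, hs1⟩ := hi1In
  obtain ⟨hp2, hs2⟩ := hi2In
  -- translate to index ranges
  have hi2rng : (kf ≤ i2.val ∧ i2.val < 2*kf) ∨ 2*kf + kb ≤ i2.val := by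
    unfold isS at hi2T
    push_neg at hi2T
    have := i2.isLt
    omega
  -- the superblock is J in every case
  have hspb1 : spb v1 v2 b (idxOf v1 v2 b n i1 ((A.run S T t).2 i1)) = J := by
    rw [spb_def, hs1, hcdiv]
  have hspb2 : spb v1 v2 b (idxOf v1 v2 b n i2 ((A.run S T t).2 i2)) = J := by
    rw [spb_def, hs2, hcdiv]
  rcases hi1S with h1 | h1 <;> rcases hi2rng with h2 | h2
  · exact hJgood i1 i2 t (Or.inl ⟨h1, h2.1, h2.2⟩) ⟨hp1, hp2, hspb1, hspb2⟩
  · exact hcgood i1 i2 t (Or.inl ⟨h1, h2⟩) ⟨hp1, hp2, hs1, hs2⟩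
  · exact hcgood i1 i2 t (Or.inr ⟨h1.1, h1.2, h2.1, h2.2⟩) ⟨hp1, hp2, hs1, hs2⟩
  · exact hJgood i1 i2 t (Or.inr ⟨h1.1, h1.2, h2⟩) ⟨hp1, hp2, hspb1, hspb2⟩

end Safety

section Streams

open MP2S

variable (v1 v2 b : ℕ) {n : ℕ}

/-- tau as a function on Fin n (total, via mod) -/
def tauF (q : Fin n) : Fin n := ⟨tau v1 v2 b n q.val % n, Nat.mod_lt _ q.pos⟩

def SL (z : Fin n → Bool) : List (Dn n) := (List.finRange n).map (fun i => (i, z i))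

def TL (z : Fin n → Bool) : List (Dn n) :=
  (List.finRange n).map (fun q => (tauF v1 v2 b q, ! z (tauF v1 v2 b q)))

@[simp] lemma SL_length (z : Fin n → Bool) : (SL z).length = n := by
  simp [SL]

@[simp] lemma TL_length (z : Fin n → Bool) : (TL v1 v2 b z).length = n := by
  simp [TL]

lemma finRange_getElem? {p : ℕ} (hp : p < n) :
    (List.finRange n)[p]? = some ⟨p, hp⟩ := by
  rw [List.getElem?_eq_getElem (by simpa using hp)]
  simp

lemma SL_getElem? (z : Fin n → Bool) {p : ℕ} (hp : p < n) :
    (SL z)[p]? = some (⟨p, hp⟩, z ⟨p, hp⟩) := by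
  unfold SL
  rw [List.getElem?_map, finRange_getElem? hp]
  rfl

lemma TL_getElem? (z : Fin n → Bool) {p : ℕ} (hp : p < n) :
    (TL v1 v2 b z)[p]? =
      some (tauF v1 v2 b ⟨p, hp⟩, ! z (tauF v1 v2 b ⟨p, hp⟩)) := by
  unfold TL
  rw [List.getElem?_map, finRange_getElem? hp]
  rfl

variable (hv1 : 1 ≤ v1) (hv2 : 1 ≤ v2) (hb : 1 ≤ b) (hvb : v1 * v2 * b ≤ n)

include hv1 hv2 hb hvb in
lemma tauF_val (q : Fin n) : (tauF v1 v2 b q).val = tau v1 v2 b n q.val :=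
  Nat.mod_eq_of_lt (tau_lt hv1 hv2 hb hvb q.isLt)

include hv1 hv2 hb hvb in
lemma tauF_inj : Function.Injective (tauF v1 v2 b (n := n)) := by
  intro q q' h
  have h' : (tauF v1 v2 b q).val = (tauF v1 v2 b q').val := congrArg Fin.val h
  rw [tauF_val v1 v2 b hv1 hv2 hb hvb, tauF_val v1 v2 b hv1 hv2 hb hvb] at h'
  exact Fin.ext (tau_inj hv1 hv2 hb hvb q.isLt q'.isLt h')

include hv1 hv2 hb hvb in
lemma tauF_surj : Function.Surjective (tauF v1 v2 b (n := n)) :=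
  Finite.surjective_of_injective (tauF_inj v1 v2 b hv1 hv2 hb hvb)

/-- the two streams built from `z` are disjoint -/
lemma SL_TL_disj (z : Fin n → Bool) : ∀ x ∈ SL z, x ∉ TL v1 v2 b z := by
  intro x hx hx'
  unfold SL at hx
  unfold TL at hx'
  obtain ⟨i, _, hi⟩ := List.mem_map.1 hx
  obtain ⟨q, _, hq⟩ := List.mem_map.1 hx'
  rw [← hq] at hi
  have h1 : i = tauF v1 v2 b q := (Prod.ext_iff.1 hi).1
  have h2 : z i = ! z (tauF v1 v2 b q) := (Prod.ext_iff.1 hi).2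
  rw [← h1] at h2
  cases z i <;> simp_all

end Streams

section StepInst

open MP2S

variable {m kf kb : ℕ} {n : ℕ} (A : MP2S (Dn n) m kf kb)
variable (v1 v2 b : ℕ)

variable (hv1 : 1 ≤ v1) (hv2 : 1 ≤ v2) (hb : 1 ≤ b) (hvb : v1 * v2 * b ≤ n)

include hv1 hv2 hb hvb in
lemma step1_inst (z z' : Fin n → Bool) (c : ℕ)
    (hz : ∀ j : Fin n, sbl v1 v2 b j.val ≠ c → z j = z' j)
    (x : A.Q × (Fin (2*kf+2*kb) → ℕ)) (hx : noT A (InRc v1 v2 b n c) x) :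
    A.step (SL z) (TL v1 v2 b z') x = A.step (SL z) (TL v1 v2 b z) x := by
  have hlen : ∀ i : Fin (2*kf+2*kb), (streamOf (SL z) (TL v1 v2 b z') i).length =
      (streamOf (SL z) (TL v1 v2 b z) i).length := by
    intro i
    by_cases h : isS kf kb i
    · rw [streamOf_pos h, streamOf_pos h]
    · rw [streamOf_neg h, streamOf_neg h, TL_length, TL_length]
  apply step_congr A hlen
  apply obs_congr
  intro i
  refine ⟨hlen i, ?_⟩
  intro hplt
  by_cases h : isS kf kb i
  · rw [streamOf_pos h, streamOf_pos (T := TL v1 v2 b z) h]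
  · rw [streamOf_neg h] at hplt
    rw [streamOf_neg h, streamOf_neg (T := TL v1 v2 b z) h]
    have hpn : x.2 i < n := by rwa [TL_length] at hplt
    have hin := hx i h
    unfold InRc at hin
    push_neg at hin
    have hsbl := hin hpn
    unfold isS at h
    push_neg at h
    by_cases h2 : i.val < 2*kf
    · rw [if_pos h2, if_pos h2,
        TL_getElem? v1 v2 b z' hpn, TL_getElem? v1 v2 b z hpn]
      have hne : sbl v1 v2 b (tauF v1 v2 b ⟨x.2 i, hpn⟩).val ≠ c := by
        rw [tauF_val v1 v2 b hv1 hv2 hb hvb]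
        rwa [idx_fT h.1 h2] at hsbl
      rw [hz _ hne]
    · have hbT : 2*kf + kb ≤ i.val := by
        have := i.isLt
        omega
      have hq : n - 1 - x.2 i < n := by omega
      rw [if_neg h2, if_neg h2, TL_length, TL_length,
        TL_getElem? v1 v2 b z' hq, TL_getElem? v1 v2 b z hq]
      have hne : sbl v1 v2 b (tauF v1 v2 b ⟨n - 1 - x.2 i, hq⟩).val ≠ c := by
        rw [tauF_val v1 v2 b hv1 hv2 hb hvb]
        rwa [idx_bT hbT] at hsbl
      rw [hz _ hne]

include hv1 hv2 hb hvb in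
lemma step2_inst (z z' : Fin n → Bool) (c : ℕ)
    (hz : ∀ j : Fin n, sbl v1 v2 b j.val ≠ c → z j = z' j)
    (x : A.Q × (Fin (2*kf+2*kb) → ℕ)) (hx : noS A (InRc v1 v2 b n c) x) :
    A.step (SL z) (TL v1 v2 b z') x = A.step (SL z') (TL v1 v2 b z') x := by
  have hlen : ∀ i : Fin (2*kf+2*kb), (streamOf (SL z) (TL v1 v2 b z') i).length =
      (streamOf (SL z') (TL v1 v2 b z') i).length := by
    intro i
    by_cases h : isS kf kb i
    · rw [streamOf_pos h, streamOf_pos h, SL_length, SL_length]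
    · rw [streamOf_neg h, streamOf_neg h]
  apply step_congr A hlen
  apply obs_congr
  intro i
  refine ⟨hlen i, ?_⟩
  intro hplt
  by_cases h : isS kf kb i
  · rw [streamOf_pos h] at hplt
    rw [streamOf_pos h, streamOf_pos (S := SL z') h]
    have hpn : x.2 i < n := by rwa [SL_length] at hplt
    have hin := hx i h
    unfold InRc at hin
    push_neg at hin
    have hsbl := hin hpn
    unfold isS at h
    by_cases h2 : i.val < 2*kf
    · have hfS : i.val < kf := by
        rcases h with h | h
        · exact h
        · omega
      rw [if_pos h2, if_pos h2, SL_getElem? z hpn, SL_getElem? z' hpn]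
      have hne : sbl v1 v2 b (x.2 i) ≠ c := by rwa [idx_fS hfS] at hsbl
      rw [hz ⟨x.2 i, hpn⟩ hne]
    · have hbS : 2*kf ≤ i.val ∧ i.val < 2*kf + kb := by
        rcases h with h | h
        · omega
        · exact h
      have hq : n - 1 - x.2 i < n := by omega
      rw [if_neg h2, if_neg h2, SL_length, SL_length,
        SL_getElem? z hq, SL_getElem? z' hq]
      have hne : sbl v1 v2 b (n - 1 - x.2 i) ≠ c := by
        rwa [idx_bS hbS.1 hbS.2] at hsbl
      rw [hz ⟨n - 1 - x.2 i, hq⟩ hne]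
  · rw [streamOf_neg h, streamOf_neg (S := SL z') h]

end StepInst

section Numeric

open Real

lemma numeric_key (n m k v : ℕ) (hn : 1 ≤ n) (hm : 1 ≤ m) (hv : 1 ≤ v)
    (h : ((k^2 * v : ℕ) : ℝ) * Real.logb 2 ((n:ℝ)+1) + ((k * v : ℕ) : ℝ) * Real.logb 2 (m:ℝ)
        + ((v : ℕ) : ℝ) * (1 + Real.logb 2 ((v:ℕ):ℝ)) ≤ (n:ℝ)) :
    v ≤ n ∧ v * m^k * (n+1)^(k*k) < 2^(n/v) := by
  have h2pos : (0:ℝ) < 2 := two_pos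
  have hvpos : (0:ℝ) < (v:ℝ) := by exact_mod_cast hv
  have hmpos : (0:ℝ) < (m:ℝ) := by exact_mod_cast hm
  have hnpos : (0:ℝ) < (n:ℝ) + 1 := by positivity
  have hL1 : 0 ≤ Real.logb 2 ((n:ℝ)+1) := Real.logb_nonneg one_lt_two (by
    have : (1:ℝ) ≤ n := by exact_mod_cast hn
    linarith)
  have hLm : 0 ≤ Real.logb 2 (m:ℝ) := Real.logb_nonneg one_lt_two (by exact_mod_cast hm)
  have hLv : 0 ≤ Real.logb 2 (v:ℝ) := Real.logb_nonneg one_lt_two (by exact_mod_cast hv)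
  push_cast at h
  have h' : (v:ℝ) * ((k:ℝ)^2 * Real.logb 2 ((n:ℝ)+1) + (k:ℝ) * Real.logb 2 (m:ℝ)
      + 1 + Real.logb 2 (v:ℝ)) ≤ (n:ℝ) := by nlinarith [h]
  have hK1 : (0:ℝ) ≤ (k:ℝ)^2 * Real.logb 2 ((n:ℝ)+1) := by positivity
  have hK2 : (0:ℝ) ≤ (k:ℝ) * Real.logb 2 (m:ℝ) := by positivity
  have hvn : v ≤ n := by
    have : (v:ℝ) ≤ (n:ℝ) := by nlinarith [h']
    exact_mod_cast this
  refine ⟨hvn, ?_⟩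
  set b := n / v with hbdef
  have hvne : 0 < v := hv
  have hnb : n < v * b + v := by
    have h1 : v * b + n % v = n := by rw [hbdef]; exact Nat.div_add_mod n v
    have h2 : n % v < v := Nat.mod_lt n hvne
    omega
  have hbreal : (n:ℝ) < (v:ℝ) * ((b:ℝ) + 1) := by
    have : (n:ℝ) < (v:ℝ) * (b:ℝ) + v := by exact_mod_cast hnb
    linarith
  set X : ℝ := (k:ℝ)^2 * Real.logb 2 ((n:ℝ)+1) + (k:ℝ) * Real.logb 2 (m:ℝ)
    + Real.logb 2 (v:ℝ) with hXdef
  have hXb : X < (b:ℝ) := by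
    have hd : (v:ℝ) * (X + 1) ≤ (n:ℝ) := by
      rw [hXdef]; nlinarith [h']
    nlinarith [hd, hbreal, hvpos]
  -- now transfer to natural numbers
  have hcast : ((v * m^k * (n+1)^(k*k) : ℕ) : ℝ) < ((2^b : ℕ) : ℝ) := by
    push_cast
    have ev : (v:ℝ) = (2:ℝ) ^ Real.logb 2 (v:ℝ) :=
      (Real.rpow_logb h2pos (by norm_num) hvpos).symm
    have em : ((m:ℝ))^(k:ℕ) = (2:ℝ) ^ ((k:ℝ) * Real.logb 2 (m:ℝ)) := by
      rw [mul_comm (k:ℝ) (Real.logb 2 (m:ℝ)), Real.rpow_mul (le_of_lt h2pos),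
        Real.rpow_natCast, Real.rpow_logb h2pos (by norm_num) hmpos]
    have en : ((n:ℝ)+1)^(k*k : ℕ) = (2:ℝ) ^ ((k:ℝ)^2 * Real.logb 2 ((n:ℝ)+1)) := by
      have : (k:ℝ)^2 = ((k*k : ℕ) : ℝ) := by push_cast; ring
      rw [this, mul_comm (((k*k : ℕ)):ℝ) (Real.logb 2 ((n:ℝ)+1)),
        Real.rpow_mul (le_of_lt h2pos), Real.rpow_natCast,
        Real.rpow_logb h2pos (by norm_num) hnpos]
    have eb : ((2:ℝ))^(b:ℕ) = (2:ℝ) ^ ((b:ℕ):ℝ) := (Real.rpow_natCast 2 b).symm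
    rw [ev, em, en, eb, ← Real.rpow_add h2pos, ← Real.rpow_add h2pos]
    apply Real.rpow_lt_rpow_of_exponent_lt one_lt_two
    rw [hXdef] at hXb
    linarith
  exact_mod_cast hcast

end Numeric
section Encoding

open MP2S

variable {D : Type} {m kf kb : ℕ} (A : MP2S D m kf kb)

def encF (n : ℕ) (x : A.Q × (Fin (2*kf+2*kb) → ℕ)) :
    A.Q × (Fin (2*kf+2*kb) → Fin (n+1)) :=
  (x.1, fun i => ⟨min (x.2 i) n, by omega⟩)

lemma encF_inj {n : ℕ} {x y : A.Q × (Fin (2*kf+2*kb) → ℕ)}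
    (hx : ∀ i, x.2 i ≤ n) (hy : ∀ i, y.2 i ≤ n) (h : encF A n x = encF A n y) : x = y := by
  obtain ⟨h1, h2⟩ := Prod.ext_iff.1 h
  refine Prod.ext_iff.2 ⟨h1, ?_⟩
  funext i
  have h3 := congrArg Fin.val (congrFun h2 i)
  simp only [encF] at h3
  have := hx i
  have := hy i
  omega

open Classical in
noncomputable def trF (InR : Fin (2*kf+2*kb) → ℕ → Prop) (S T : List D) (n Tend : ℕ) :
    Fin (2*kf+2*kb) → A.Q × (Fin (2*kf+2*kb) → Fin (n+1)) := fun i =>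
  if h : ∃ t, InR i ((A.run S T t).2 i) then
    encF A n (A.run S T (sInf {t | InR i ((A.run S T t).2 i)}))
  else encF A n (A.run S T Tend)

lemma pos_le_n {n : ℕ} {S T : List D} (hS : S.length = n) (hT : T.length = n)
    (t : ℕ) (i : Fin (2*kf+2*kb)) : (A.run S T t).2 i ≤ n := by
  have h := pos_le A S T t i
  by_cases hi : isS kf kb i
  · rwa [streamOf_pos hi, hS] at h
  · rwa [streamOf_neg hi, hT] at h

lemma done_pos_n {n : ℕ} {S T : List D} (hS : S.length = n) (hT : T.length = n)
    {t : ℕ} (hdone : Done S T ((A.run S T t).2)) (i : Fin (2*kf+2*kb)) :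
    (A.run S T t).2 i = n := by
  have h := (done_iff A S T t).1 hdone i
  by_cases hi : isS kf kb i
  · rwa [streamOf_pos hi, hS] at h
  · rwa [streamOf_neg hi, hT] at h

/-- consequences of transcript equality -/
lemma trF_consequences {n : ℕ} (InR : Fin (2*kf+2*kb) → ℕ → Prop)
    {S T S' T' : List D} (hS : S.length = n) (hT : T.length = n)
    (hS' : S'.length = n) (hT' : T'.length = n)
    (hlt : ∀ i p, InR i p → p < n)
    {Tend Tend' : ℕ}
    (hdone : Done S T ((A.run S T Tend).2)) (hdone' : Done S' T' ((A.run S' T' Tend').2))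
    (h : trF A InR S T n Tend = trF A InR S' T' n Tend') :
    (∀ i, (∃ t, InR i ((A.run S T t).2 i)) ↔ (∃ t, InR i ((A.run S' T' t).2 i))) ∧
    (∀ i, (∃ t, InR i ((A.run S T t).2 i)) →
      A.run S T (sInf {t | InR i ((A.run S T t).2 i)}) =
        A.run S' T' (sInf {t | InR i ((A.run S' T' t).2 i)})) := by
  classical
  have hbnd : ∀ t i, (A.run S T t).2 i ≤ n := fun t i => pos_le_n A hS hT t i
  have hbnd' : ∀ t i, (A.run S' T' t).2 i ≤ n := fun t i => pos_le_n A hS' hT' t i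
  have key : ∀ i, ((∃ t, InR i ((A.run S T t).2 i)) ↔ (∃ t, InR i ((A.run S' T' t).2 i))) ∧
      ((∃ t, InR i ((A.run S T t).2 i)) →
        A.run S T (sInf {t | InR i ((A.run S T t).2 i)}) =
          A.run S' T' (sInf {t | InR i ((A.run S' T' t).2 i)})) := by
    intro i
    have hi := congrFun h i
    unfold trF at hi
    by_cases h1 : ∃ t, InR i ((A.run S T t).2 i) <;>
      by_cases h2 : ∃ t, InR i ((A.run S' T' t).2 i)
    · rw [dif_pos h1, dif_pos h2] at hi
      exact ⟨iff_of_true h1 h2, fun _ => encF_inj A (hbnd _) (hbnd' _) hi⟩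
    · exfalso
      rw [dif_pos h1, dif_neg h2] at hi
      have hcfg := encF_inj A (hbnd _) (hbnd' _) hi
      have hIn : InR i ((A.run S T (sInf {t | InR i ((A.run S T t).2 i)})).2 i) :=
        Nat.sInf_mem h1
      rw [hcfg] at hIn
      have := done_pos_n A hS' hT' hdone' i
      rw [this] at hIn
      exact absurd (hlt i n hIn) (lt_irrefl n)
    · exfalso
      rw [dif_neg h1, dif_pos h2] at hi
      have hcfg := encF_inj A (hbnd _) (hbnd' _) hi
      have hIn : InR i ((A.run S' T' (sInf {t | InR i ((A.run S' T' t).2 i)})).2 i) :=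
        Nat.sInf_mem h2
      rw [← hcfg] at hIn
      have := done_pos_n A hS hT hdone i
      rw [this] at hIn
      exact absurd (hlt i n hIn) (lt_irrefl n)
    · exact ⟨iff_of_false h1 h2, fun hc => absurd hc h1⟩
  exact ⟨fun i => (key i).1, fun i => (key i).2⟩

end Encoding
end DisjAux



set_option maxHeartbeats 1000000 in
open DisjAux MP2S in
/-- Let `n, m ≥ 1` and `kf, kb ≥ 0` and set `k = 2*kf + 2*kb` and
`v = (kf^2 + kb^2 + 1)·(2·kf·kb + 1)`.  If
`k^2·v·log₂(n+1) + k·v·log₂ m + v·(1 + log₂ v) ≤ n`, then the set disjointness problem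
`Disj_n` cannot be solved by any mp2s-automaton with parameters `(D_n, m, kf, kb)`. -/
theorem disj_lower_bound_general (n m kf kb : ℕ) (hn : 1 ≤ n) (hm : 1 ≤ m)
    (h : (((2 * kf + 2 * kb) ^ 2 * ((kf ^ 2 + kb ^ 2 + 1) * (2 * kf * kb + 1)) : ℕ) : ℝ)
          * Real.logb 2 ((n : ℝ) + 1)
        + (((2 * kf + 2 * kb) * ((kf ^ 2 + kb ^ 2 + 1) * (2 * kf * kb + 1)) : ℕ) : ℝ)
          * Real.logb 2 (m : ℝ)
        + (((kf ^ 2 + kb ^ 2 + 1) * (2 * kf * kb + 1) : ℕ) : ℝ)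
          * (1 + Real.logb 2 (((kf ^ 2 + kb ^ 2 + 1) * (2 * kf * kb + 1) : ℕ) : ℝ))
        ≤ (n : ℝ)) :
    ∀ A : MP2S (MP2S.Dn n) m kf kb, ¬ MP2S.SolvesDisj n A := by
  intro A hsolve
  classical
  have hv : 1 ≤ (kf^2+kb^2+1)*(2*kf*kb+1) := Nat.one_le_iff_ne_zero.2 (by positivity)
  obtain ⟨hvn, hkey⟩ :=
    numeric_key n m (2*kf+2*kb) ((kf^2+kb^2+1)*(2*kf*kb+1)) hn hm hv h
  set v1 := kf^2+kb^2+1 with hv1def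
  set v2 := 2*kf*kb+1 with hv2def
  set b := n / (v1*v2) with hbdef
  have hv1 : 1 ≤ v1 := by rw [hv1def]; exact Nat.succ_le_succ (Nat.zero_le _)
  have hv2 : 1 ≤ v2 := by rw [hv2def]; exact Nat.succ_le_succ (Nat.zero_le _)
  have hb1 : 1 ≤ b := by
    rw [hbdef]
    exact (Nat.one_le_div_iff (by omega)).2 hvn
  have hvb : v1*v2*b ≤ n := by
    have h1 : b * (v1*v2) ≤ n := Nat.div_mul_le_self n (v1*v2)
    calc v1*v2*b = b*(v1*v2) := by ring
    _ ≤ n := h1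
  have hc1 : kf*kf + kb*kb < v1 := by
    have e1 : kf^2 = kf*kf := by ring
    have e2 : kb^2 = kb*kb := by ring
    rw [hv1def]
    omega
  have hc2 : kf*kb + kb*kf < v2 := by
    have e : kb*kf = kf*kb := by ring
    have e2 : 2*kf*kb = 2*(kf*kb) := by ring
    rw [hv2def]
    omega
  -- acceptance witnesses
  have hacc : ∀ z : Fin n → Bool, ∃ t,
      Done (SL z) (TL v1 v2 b z) ((A.run (SL z) (TL v1 v2 b z) t).2) ∧
      (A.run (SL z) (TL v1 v2 b z) t).1 ∈ A.accept := fun z =>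
    (hsolve (SL z) (TL v1 v2 b z) (SL_length z) (TL_length v1 v2 b z)).2
      (SL_TL_disj v1 v2 b z)
  choose Tacc hTd hTa using hacc
  -- safe subblocks
  have hsfEx : ∀ z : Fin n → Bool, ∃ c, c < v1*v2 ∧ ∀ t,
      noS A (InRc v1 v2 b n c) (A.run (SL z) (TL v1 v2 b z) t) ∨
      noT A (InRc v1 v2 b n c) (A.run (SL z) (TL v1 v2 b z) t) := fun z =>
    exists_safe A hv1 hv2 hb1 hvb hc1 hc2 (SL z) (TL v1 v2 b z)
      (SL_length z) (TL_length v1 v2 b z)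
  choose csafe hclt hcsafe using hsfEx
  -- the fingerprint map
  set θ : (Fin n → Bool) → (Σ cc : Fin (v1*v2),
      ({ j : Fin n // sbl v1 v2 b j.val ≠ cc.val } → Bool) ×
      (Fin (2*kf+2*kb) → A.Q × (Fin (2*kf+2*kb) → Fin (n+1)))) :=
    fun z => ⟨⟨csafe z, hclt z⟩, fun j => z j.1,
      trF A (InRc v1 v2 b n (csafe z)) (SL z) (TL v1 v2 b z) n (Tacc z)⟩ with hθdef
  -- cardinality bound
  have hble : b ≤ n := by rw [hbdef]; exact Nat.div_le_self _ _
  have hEnc : Fintype.card (A.Q × (Fin (2*kf+2*kb) → Fin (n+1))) =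
      m * (n+1)^(2*kf+2*kb) := by
    rw [Fintype.card_prod, A.cardQ, Fintype.card_fun, Fintype.card_fin, Fintype.card_fin]
  have hsubcard : ∀ cc : Fin (v1*v2),
      Fintype.card { j : Fin n // sbl v1 v2 b j.val ≠ cc.val } ≤ n - b := by
    intro cc
    have hcc := cc.isLt
    have hmemf : ∀ r : Fin b, cc.val * b + r.val < n := by
      intro r
      have h1 : (cc.val + 1) * b ≤ (v1*v2) * b := Nat.mul_le_mul_right b (by omega)
      have h2 : (cc.val+1)*b = cc.val*b + b := by ring
      have h3 : (v1*v2)*b = v1*v2*b := by ring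
      omega
    have hmems : ∀ r : Fin b, sbl v1 v2 b (cc.val * b + r.val) = cc.val := by
      intro r
      refine (sbl_char hb1 (hmemf r) hcc).2 ⟨Nat.le_add_right _ _, ?_⟩
      have h4 := cLo_add_b_le_cHi hb1 hvb hcc
      unfold cLo at h4
      omega
    have hinj : Function.Injective (fun r : Fin b =>
        (⟨⟨cc.val*b + r.val, hmemf r⟩, hmems r⟩ :
          { j : Fin n // sbl v1 v2 b j.val = cc.val })) := by
      intro r r' hr
      have h5 := congrArg (fun x : { j : Fin n // sbl v1 v2 b j.val = cc.val } => x.1.val) hr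
      simp only at h5
      exact Fin.ext (by omega)
    have hge : b ≤ Fintype.card { j : Fin n // sbl v1 v2 b j.val = cc.val } := by
      have h6 := Fintype.card_le_of_injective _ hinj
      simpa using h6
    have hcompl : Fintype.card { j : Fin n // sbl v1 v2 b j.val ≠ cc.val } =
        Fintype.card (Fin n) - Fintype.card { j : Fin n // sbl v1 v2 b j.val = cc.val } :=
      Fintype.card_subtype_compl _
    rw [hcompl, Fintype.card_fin]
    omega
  have hcard : Fintype.card (Σ cc : Fin (v1*v2),
      ({ j : Fin n // sbl v1 v2 b j.val ≠ cc.val } → Bool) ×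
      (Fin (2*kf+2*kb) → A.Q × (Fin (2*kf+2*kb) → Fin (n+1)))) <
      Fintype.card (Fin n → Bool) := by
    have hcfun : Fintype.card (Fin n → Bool) = 2^n := by
      rw [Fintype.card_fun, Fintype.card_bool, Fintype.card_fin]
    rw [hcfun, Fintype.card_sigma]
    have hstep : ∀ cc : Fin (v1*v2),
        Fintype.card (({ j : Fin n // sbl v1 v2 b j.val ≠ cc.val } → Bool) ×
          (Fin (2*kf+2*kb) → A.Q × (Fin (2*kf+2*kb) → Fin (n+1)))) ≤
        2^(n-b) * (m * (n+1)^(2*kf+2*kb))^(2*kf+2*kb) := by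
      intro cc
      rw [Fintype.card_prod, Fintype.card_fun, Fintype.card_fun, hEnc,
        Fintype.card_bool, Fintype.card_fin]
      exact Nat.mul_le_mul (Nat.pow_le_pow_right (by omega) (hsubcard cc)) le_rfl
    calc ∑ cc : Fin (v1*v2), Fintype.card
          (({ j : Fin n // sbl v1 v2 b j.val ≠ cc.val } → Bool) ×
          (Fin (2*kf+2*kb) → A.Q × (Fin (2*kf+2*kb) → Fin (n+1))))
        ≤ ∑ _cc : Fin (v1*v2), 2^(n-b) * (m * (n+1)^(2*kf+2*kb))^(2*kf+2*kb) :=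
          Finset.sum_le_sum (fun cc _ => hstep cc)
      _ = (v1*v2) * (2^(n-b) * (m * (n+1)^(2*kf+2*kb))^(2*kf+2*kb)) := by
          rw [Finset.sum_const, Finset.card_univ, Fintype.card_fin, smul_eq_mul]
      _ < 2^n := by
          have e1 : (m * (n+1)^(2*kf+2*kb))^(2*kf+2*kb) =
              m^(2*kf+2*kb) * (n+1)^((2*kf+2*kb)*(2*kf+2*kb)) := by
            rw [mul_pow, ← pow_mul]
          rw [e1]
          have e2 : (v1*v2) * (2^(n-b) * (m^(2*kf+2*kb) * (n+1)^((2*kf+2*kb)*(2*kf+2*kb))))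
              = 2^(n-b) * (v1*v2 * m^(2*kf+2*kb) * (n+1)^((2*kf+2*kb)*(2*kf+2*kb))) := by
            ring
          rw [e2]
          have h7 : 2^(n-b) * (v1*v2 * m^(2*kf+2*kb) * (n+1)^((2*kf+2*kb)*(2*kf+2*kb)))
              < 2^(n-b) * 2^b := by
            have hp : 0 < 2^(n-b) := by positivity
            exact mul_lt_mul_of_pos_left hkey hp
          rw [← pow_add] at h7
          have e3 : n - b + b = n := by omega
          rwa [e3] at h7
  obtain ⟨z, z', hzz, hθeq⟩ := Fintype.exists_ne_map_eq_of_card_lt θ hcard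
  simp only [hθdef] at hθeq
  have hc : csafe z = csafe z' := congrArg (fun p : (Σ cc : Fin (v1*v2),
      ({ j : Fin n // sbl v1 v2 b j.val ≠ cc.val } → Bool) ×
      (Fin (2*kf+2*kb) → A.Q × (Fin (2*kf+2*kb) → Fin (n+1)))) => p.1.val) hθeq
  have htr' : trF A (InRc v1 v2 b n (csafe z)) (SL z) (TL v1 v2 b z) n (Tacc z) =
      trF A (InRc v1 v2 b n (csafe z')) (SL z') (TL v1 v2 b z') n (Tacc z') :=
    congrArg (fun p : (Σ cc : Fin (v1*v2),
      ({ j : Fin n // sbl v1 v2 b j.val ≠ cc.val } → Bool) ×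
      (Fin (2*kf+2*kb) → A.Q × (Fin (2*kf+2*kb) → Fin (n+1)))) => p.2.2) hθeq
  rw [← hc] at htr'
  have hzoff : ∀ j : Fin n, sbl v1 v2 b j.val ≠ csafe z → z j = z' j := by
    intro j hj
    have hj' : sbl v1 v2 b j.val ≠ csafe z' := hc ▸ hj
    have hcong := congrArg (fun p : (Σ cc : Fin (v1*v2),
        ({ jj : Fin n // sbl v1 v2 b jj.val ≠ cc.val } → Bool) ×
        (Fin (2*kf+2*kb) → A.Q × (Fin (2*kf+2*kb) → Fin (n+1)))) =>
      if hh : sbl v1 v2 b j.val ≠ p.1.val then some (p.2.1 ⟨j, hh⟩) else none) hθeq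
    simp only at hcong
    rw [dif_pos hj, dif_pos hj'] at hcong
    exact Option.some_injective _ hcong
  have hcons := trF_consequences A (InRc v1 v2 b n (csafe z))
    (SL_length z) (TL_length v1 v2 b z) (SL_length z') (TL_length v1 v2 b z')
    (fun i p hp => InRc_lt v1 v2 b n hp) (hTd z) (hTd z') htr'
  have hmix : A.Accepts (SL z) (TL v1 v2 b z') :=
    paste_accepts A (SL_length z) (TL_length v1 v2 b z) (SL_length z')
      (TL_length v1 v2 b z') (InRc v1 v2 b n (csafe z))
      (fun i p hp => InRc_lt v1 v2 b n hp)
      (fun i p q r h1 h2 h3 h4 => InRc_convex hv1 hv2 hb1 hvb i p q r h1 h2 h3 h4)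
      (fun x hx => step1_inst A v1 v2 b hv1 hv2 hb1 hvb z z' (csafe z) hzoff x hx)
      (fun x hx => step2_inst A v1 v2 b hv1 hv2 hb1 hvb z z' (csafe z) hzoff x hx)
      (hcsafe z) (fun t => by rw [hc]; exact hcsafe z' t)
      hcons.1 hcons.2 (Tacc z) (Tacc z') (hTd z) (hTa z) (hTd z') (hTa z')
  have hne : ∃ j : Fin n, z j ≠ z' j := by
    by_contra hcon
    push_neg at hcon
    exact hzz (funext hcon)
  obtain ⟨j₀, hj₀⟩ := hne
  have hmem1 : ((j₀, z j₀) : MP2S.Dn n) ∈ SL z :=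
    List.mem_map.2 ⟨j₀, List.mem_finRange j₀, rfl⟩
  obtain ⟨q, hq⟩ := tauF_surj v1 v2 b hv1 hv2 hb1 hvb j₀
  have hmem2 : ((j₀, z j₀) : MP2S.Dn n) ∈ TL v1 v2 b z' := by
    refine List.mem_map.2 ⟨q, List.mem_finRange q, ?_⟩
    rw [hq]
    have hzb : z j₀ = ! z' j₀ := by
      revert hj₀
      rcases Bool.eq_false_or_eq_true (z j₀) with h1 | h1 <;>
        rcases Bool.eq_false_or_eq_true (z' j₀) with h2 | h2 <;>
        rw [h1, h2] <;> decide
    rw [hzb]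
  have hdisj := (hsolve (SL z) (TL v1 v2 b z') (SL_length z)
    (TL_length v1 v2 b z')).1 hmix
  exact (hdisj _ hmem1) hmem2
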